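/- arXiv:2602.07701 — 8 statements merged into one kernel-verified Lean document; each statement's English description precedes it below -/
import Mathlib

section
/- Let ν > 0 and let v̂ : ℝ → ℝ be C⁵ on a neighborhood of 0 with v̂(0) > 0. Then there exist ε > 0, a > 0 and a C⁵ function p : (−a, a) → ℝ with p(0) = 0 and p′(0) = 1/√ν such that ω_bg(p(ω)) = ω for all ω ∈ [0, a) and p(ω_bg(k)) = k for all k ∈ [0, ε). In particular, the composed function ω ↦ v̂(p(ω)) is C⁵ on (−a, a). -/
noncomputable def omegaBg (ν : ℝ) (vhat : ℝ → ℝ) (k : ℝ) : ℝ :=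
  Real.sqrt (k ^ 4 / 4 + ν * (vhat k / vhat 0) * k ^ 2)

/-- inversion of the Bogoliubov dispersion relation near `0`. -/
theorem stmt_0 (ν : ℝ) (hν : 0 < ν) (vhat : ℝ → ℝ)
    (hsmooth : ContDiffAt ℝ 5 vhat 0) (hv0 : 0 < vhat 0) :
    ∃ ε > (0:ℝ), ∃ a > (0:ℝ), ∃ p : ℝ → ℝ,
      ContDiffOn ℝ 5 p (Set.Ioo (-a) a) ∧
      p 0 = 0 ∧
      HasDerivAt p (1 / Real.sqrt ν) 0 ∧
      (∀ ω ∈ Set.Ico (0:ℝ) a, omegaBg ν vhat (p ω) = ω) ∧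
      (∀ k ∈ Set.Ico (0:ℝ) ε, p (omegaBg ν vhat k) = k) ∧
      ContDiffOn ℝ 5 (fun ω => vhat (p ω)) (Set.Ioo (-a) a) := by
  classical
  set c : ℝ → ℝ := fun x => x ^ 2 / 4 + ν * (vhat x / vhat 0) with hc
  have hc0 : c 0 = ν := by simp [hc, div_self hv0.ne']
  have hcC : ContDiffAt ℝ 5 c 0 := by
    apply ContDiffAt.add
    · exact (contDiffAt_id.pow 2).div_const 4
    · exact (contDiffAt_const.mul (hsmooth.div_const _)).congr_of_eventuallyEq
        (by filter_upwards with x using rfl) |>.congr_of_eventuallyEq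
        (by filter_upwards with x using rfl)
  have hcpos : c 0 ≠ 0 := by rw [hc0]; exact hν.ne'
  set g : ℝ → ℝ := fun x => x * Real.sqrt (c x) with hgdef
  have hgC : ContDiffAt ℝ 5 g 0 :=
    contDiffAt_id.mul ((Real.contDiffAt_sqrt hcpos).comp 0 hcC)
  have hg0 : g 0 = 0 := by simp [hgdef]
  -- derivative of g at 0
  have hsC : ContDiffAt ℝ 5 (fun x => Real.sqrt (c x)) 0 :=
    (Real.contDiffAt_sqrt hcpos).comp 0 hcC
  have hsd : DifferentiableAt ℝ (fun x => Real.sqrt (c x)) 0 :=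
    hsC.differentiableAt (by norm_num)
  have hgd : HasDerivAt g (Real.sqrt ν) 0 := by
    have h := (hasDerivAt_id 0).mul hsd.hasDerivAt
    simp [hc0] at h
    exact h
  have hgs : HasStrictDerivAt g (Real.sqrt ν) 0 := by
    have := hgC.hasStrictDerivAt (by norm_num)
    rwa [hgd.deriv] at this
  have hne : Real.sqrt ν ≠ 0 := (Real.sqrt_pos.mpr hν).ne'
  set p : ℝ → ℝ := hgs.localInverse g (Real.sqrt ν) 0 hne with hpdef
  have hstrict := hgs.hasStrictFDerivAt_equiv hne
  have hp0 : p 0 = 0 := by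
    have := hstrict.localInverse_apply_image
    rwa [hg0] at this
  have hpd : HasDerivAt p (1 / Real.sqrt ν) 0 := by
    have := hgs.to_localInverse hne
    rw [hg0] at this
    simpa [one_div] using this.hasDerivAt
  -- smoothness of p at 0
  have hpc : ContDiffAt ℝ 5 p 0 := by
    have := hgC.to_localInverse (f' := ContinuousLinearEquiv.unitsEquivAut ℝ
      (Units.mk0 _ hne)) (hstrict.hasFDerivAt) (by norm_num)
    rwa [hg0] at this
  have hvpc : ContDiffAt ℝ 5 (fun ω => vhat (p ω)) 0 := by
    have : ContDiffAt ℝ 5 vhat (p 0) := by rwa [hp0]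
    exact this.comp 0 hpc
  -- gather eventual facts near 0 in the ω variable
  have hccont : ContinuousAt c 0 := hcC.continuousAt
  have hpcont : ContinuousAt p 0 := hpc.continuousAt
  have hEc : ∀ᶠ ω in nhds (0:ℝ), 0 < c (p ω) := by
    have ht : Filter.Tendsto (fun ω => c (p ω)) (nhds 0) (nhds ν) := by
      have h1 : Filter.Tendsto p (nhds 0) (nhds 0) := by
        simpa [hp0] using hpcont.tendsto
      have h2 : Filter.Tendsto c (nhds 0) (nhds ν) := by
        simpa [hc0] using hccont.tendsto
      exact h2.comp h1
    exact ht.eventually (eventually_gt_nhds hν)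
  have hEg : ∀ᶠ ω in nhds (0:ℝ), g (p ω) = ω := by
    have := hstrict.eventually_right_inverse
    rwa [hg0] at this
  obtain ⟨u1, hu1, hpu1⟩ := hpc.contDiffOn le_rfl (by simp)
  obtain ⟨u2, hu2, hvu2⟩ := hvpc.contDiffOn le_rfl (by simp)
  have hall : ∀ᶠ ω in nhds (0:ℝ), 0 < c (p ω) ∧ g (p ω) = ω ∧ ω ∈ u1 ∧ ω ∈ u2 :=
    hEc.and (hEg.and (((Filter.eventually_iff.mpr hu1).and (Filter.eventually_iff.mpr hu2))))
  have hFc : ∀ᶠ k in nhds (0:ℝ), 0 < c k := by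
    have h2 : Filter.Tendsto c (nhds 0) (nhds ν) := by
      simpa [hc0] using hccont.tendsto
    exact h2.eventually (eventually_gt_nhds hν)
  have hFp : ∀ᶠ k in nhds (0:ℝ), p (g k) = k := hstrict.eventually_left_inverse
  obtain ⟨a, ha, hA⟩ := Metric.eventually_nhds_iff.mp hall
  obtain ⟨ε, hε, hE⟩ := Metric.eventually_nhds_iff.mp (hFc.and hFp)
  have key : ∀ x : ℝ, 0 < c x →
      omegaBg ν vhat x = |x| * Real.sqrt (c x) := by
    intro x hx
    have : x ^ 4 / 4 + ν * (vhat x / vhat 0) * x ^ 2 = x ^ 2 * c x := by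
      simp only [hc]; ring
    rw [omegaBg, this, Real.sqrt_mul (sq_nonneg x), Real.sqrt_sq_eq_abs]
  refine ⟨ε, hε, a, ha, p, ?_, hp0, hpd, ?_, ?_, ?_⟩
  · refine hpu1.mono fun ω hω => ?_
    have : dist ω 0 < a := by
      rw [Real.dist_eq, sub_zero, abs_lt]; exact ⟨hω.1, hω.2⟩
    exact ((hA this).2.2).1
  · intro ω hω
    have hd : dist ω 0 < a := by
      rw [Real.dist_eq, sub_zero, abs_lt]
      exact ⟨lt_of_lt_of_le (neg_neg_iff_pos.mpr ha) hω.1, hω.2⟩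
    obtain ⟨hcp, hgp, -⟩ := hA hd
    rw [key _ hcp]
    have : |p ω| * Real.sqrt (c (p ω)) = |p ω * Real.sqrt (c (p ω))| := by
      rw [abs_mul, abs_of_nonneg (Real.sqrt_nonneg _)]
    rw [this]
    have : p ω * Real.sqrt (c (p ω)) = ω := hgp
    rw [this, abs_of_nonneg hω.1]
  · intro k hk
    have hd : dist k 0 < ε := by
      rw [Real.dist_eq, sub_zero, abs_lt]
      exact ⟨lt_of_lt_of_le (neg_neg_iff_pos.mpr hε) hk.1, hk.2⟩
    obtain ⟨hck, hpk⟩ := hE hd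
    rw [key _ hck, abs_of_nonneg hk.1]
    exact hpk
  · refine hvu2.mono fun ω hω => ?_
    have : dist ω 0 < a := by
      rw [Real.dist_eq, sub_zero, abs_lt]; exact ⟨hω.1, hω.2⟩
    exact ((hA this).2.2).2
end

section
/- Let ν > 0 and let v̂ : ℝ → ℝ be C⁵ on a neighborhood of 0 with v̂(0) > 0, v̂′(0) = 0 and 1 + 2ν v̂″(0)/v̂(0) > 0. Then there exists K > 0 such that the function k ↦ ω_bg(k) is strictly convex on the interval [0, K]. -/
/-- strict convexity of the Bogoliubov dispersion relation near `0`. -/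
theorem stmt_1 (ν : ℝ) (hν : 0 < ν) (vhat : ℝ → ℝ)
    (hsmooth : ContDiffAt ℝ 5 vhat 0) (hv0 : 0 < vhat 0)
    (hd1 : deriv vhat 0 = 0)
    (hd2 : 0 < 1 + 2 * ν * deriv (deriv vhat) 0 / vhat 0) :
    ∃ K > (0:ℝ), StrictConvexOn ℝ (Set.Icc (0:ℝ) K) (omegaBg ν vhat) := by
  have hVne : vhat 0 ≠ 0 := ne_of_gt hv0
  set v1 := deriv vhat with hv1def
  set v2 := deriv v1 with hv2def
  set v3 := deriv v2 with hv3def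
  obtain ⟨u, hu, hvu⟩ := hsmooth.contDiffOn (le_refl 5) (by simp)
  obtain ⟨ε, hε, hball⟩ := Metric.mem_nhds_iff.1 hu
  set B := Metric.ball (0:ℝ) ε with hBdef
  have hBopen : IsOpen B := Metric.isOpen_ball
  have h0B : (0:ℝ) ∈ B := Metric.mem_ball_self hε
  have hv5 : ContDiffOn ℝ 5 vhat B := hvu.mono hball
  have hc1 : ContDiffOn ℝ 4 v1 B := hv5.deriv_of_isOpen hBopen (by norm_num)
  have hc2 : ContDiffOn ℝ 3 v2 B := hc1.deriv_of_isOpen hBopen (by norm_num)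
  have hc3 : ContDiffOn ℝ 2 v3 B := hc2.deriv_of_isOpen hBopen (by norm_num)
  have hd_v : ∀ x ∈ B, HasDerivAt vhat (v1 x) x := fun x hx =>
    ((hv5.differentiableOn (by norm_num)).differentiableAt (hBopen.mem_nhds hx)).hasDerivAt
  have hd_v1 : ∀ x ∈ B, HasDerivAt v1 (v2 x) x := fun x hx =>
    ((hc1.differentiableOn (by norm_num)).differentiableAt (hBopen.mem_nhds hx)).hasDerivAt
  have hd_v2 : ∀ x ∈ B, HasDerivAt v2 (v3 x) x := fun x hx =>
    ((hc2.differentiableOn (by norm_num)).differentiableAt (hBopen.mem_nhds hx)).hasDerivAt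
  have hcont3 : ContinuousAt v3 0 :=
    (hc3.continuousOn.continuousAt (hBopen.mem_nhds h0B))
  have hcont2 : ContinuousAt v2 0 :=
    (hc2.continuousOn.continuousAt (hBopen.mem_nhds h0B))
  set c := ν / vhat 0 with hcdef
  have hcpos : 0 < c := div_pos hν hv0
  set f : ℝ → ℝ := fun k => k ^ 4 / 4 + ν * (vhat k / vhat 0) * k ^ 2 with hfdef
  set f1 : ℝ → ℝ := fun k => k ^ 3 + c * (v1 k * k ^ 2 + 2 * vhat k * k) with hf1def
  set f2 : ℝ → ℝ := fun k =>
    3 * k ^ 2 + c * (v2 k * k ^ 2 + 4 * v1 k * k + 2 * vhat k) with hf2def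
  set f3 : ℝ → ℝ := fun k =>
    6 * k + c * (v3 k * k ^ 2 + 6 * v2 k * k + 6 * v1 k) with hf3def
  have hDf : ∀ x ∈ B, HasDerivAt f (f1 x) x := by
    intro x hx
    have h := ((hasDerivAt_pow 4 x).div_const 4).add
      ((((hd_v x hx).div_const (vhat 0)).const_mul ν).mul (hasDerivAt_pow 2 x))
    refine h.congr_deriv ?_
    simp only [hf1def, hcdef]
    push_cast
    field_simp
  have hDf1 : ∀ x ∈ B, HasDerivAt f1 (f2 x) x := by
    intro x hx
    have h := (hasDerivAt_pow 3 x).add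
      ((((hd_v1 x hx).mul (hasDerivAt_pow 2 x)).add
        (((hd_v x hx).const_mul 2).mul (hasDerivAt_id' (𝕜 := ℝ) x))).const_mul c)
    refine h.congr_deriv ?_
    simp only [hf2def]
    push_cast
    ring
  have hDf2 : ∀ x ∈ B, HasDerivAt f2 (f3 x) x := by
    intro x hx
    have h := ((hasDerivAt_pow 2 x).const_mul 3).add
      (((((hd_v2 x hx).mul (hasDerivAt_pow 2 x)).add
        (((hd_v1 x hx).const_mul 4).mul (hasDerivAt_id' (𝕜 := ℝ) x))).add
        ((hd_v x hx).const_mul 2)).const_mul c)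
    refine h.congr_deriv ?_
    simp only [hf3def]
    push_cast
    ring
  set g : ℝ → ℝ := fun k => 2 * f k * f2 k - f1 k ^ 2 with hgdef
  have hDg : ∀ x ∈ B, HasDerivAt g (2 * f x * f3 x) x := by
    intro x hx
    have h := (((hDf x hx).const_mul 2).mul (hDf2 x hx)).sub ((hDf1 x hx).pow 2)
    refine h.congr_deriv ?_
    push_cast
    ring
  -- limit of f3 k / k as k → 0⁺
  have hslope : Filter.Tendsto (fun k => v1 k / k) (nhdsWithin 0 (Set.Ioi 0))
      (nhds (v2 0)) := by
    have h := (hasDerivAt_iff_tendsto_slope.1 (hd_v1 0 h0B))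
    have h' : Filter.Tendsto (slope v1 0) (nhdsWithin 0 (Set.Ioi 0)) (nhds (v2 0)) :=
      h.mono_left (nhdsWithin_mono 0 (fun x hx => by
        simpa using ne_of_gt (Set.mem_Ioi.1 hx)))
    refine h'.congr (fun k => ?_)
    simp [slope, hd1, div_eq_inv_mul]
  have hLpos : 0 < 6 + c * (v3 0 * 0 + 6 * v2 0 + 6 * v2 0) := by
    have : 6 + c * (v3 0 * 0 + 6 * v2 0 + 6 * v2 0)
        = 6 * (1 + 2 * ν * v2 0 / vhat 0) := by
      simp only [hcdef]; field_simp; ring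
    rw [this]
    linarith
  have hf3lim : Filter.Tendsto (fun k => f3 k / k) (nhdsWithin 0 (Set.Ioi 0))
      (nhds (6 + c * (v3 0 * 0 + 6 * v2 0 + 6 * v2 0))) := by
    have hv3k : Filter.Tendsto (fun k : ℝ => v3 k * k) (nhdsWithin 0 (Set.Ioi 0))
        (nhds (v3 0 * 0)) :=
      ((hcont3.tendsto.mono_left nhdsWithin_le_nhds).mul
        (Filter.tendsto_id.mono_left nhdsWithin_le_nhds))
    have hv2k : Filter.Tendsto (fun k : ℝ => v2 k) (nhdsWithin 0 (Set.Ioi 0))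
        (nhds (v2 0)) := hcont2.tendsto.mono_left nhdsWithin_le_nhds
    have hmain := (tendsto_const_nhds (x := (6:ℝ))).add
      (((hv3k.add ((hv2k.const_mul 6))).add (hslope.const_mul 6)).const_mul c)
    have hmain' : Filter.Tendsto
        (fun k => 6 + c * ((v3 k * k + 6 * v2 k) + 6 * (v1 k / k)))
        (nhdsWithin 0 (Set.Ioi 0))
        (nhds (6 + c * ((v3 0 * 0 + 6 * v2 0) + 6 * v2 0))) := by
      convert hmain using 2 <;> ring
    have : (6 + c * (v3 0 * 0 + 6 * v2 0 + 6 * v2 0))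
        = (6 + c * ((v3 0 * 0 + 6 * v2 0) + 6 * v2 0)) := by ring
    rw [this]
    refine hmain'.congr' ?_
    filter_upwards [self_mem_nhdsWithin] with k hk
    have hkne : k ≠ 0 := ne_of_gt (Set.mem_Ioi.1 hk)
    simp only [hf3def]
    rw [eq_div_iff hkne]
    calc (6 + c * (v3 k * k + 6 * v2 k + 6 * (v1 k / k))) * k
        = 6 * k + c * (v3 k * k ^ 2 + 6 * v2 k * k + 6 * (v1 k / k * k)) := by ring
      _ = 6 * k + c * (v3 k * k ^ 2 + 6 * v2 k * k + 6 * v1 k) := by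
          rw [div_mul_cancel₀ _ hkne]
  have hf3pos : ∀ᶠ k in nhdsWithin 0 (Set.Ioi 0), 0 < f3 k := by
    filter_upwards [hf3lim.eventually (lt_mem_nhds hLpos), self_mem_nhdsWithin]
      with k hk hk'
    have hkpos : (0:ℝ) < k := Set.mem_Ioi.1 hk'
    have := mul_pos hk hkpos
    rwa [div_mul_cancel₀ _ (ne_of_gt hkpos)] at this
  -- f positivity near 0⁺
  have hfquot : ContinuousAt (fun k : ℝ => k ^ 2 / 4 + ν * (vhat k / vhat 0)) 0 := by
    have hcv : ContinuousAt vhat 0 :=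
      hv5.continuousOn.continuousAt (hBopen.mem_nhds h0B)
    fun_prop
  have hfq0 : (0:ℝ) < (fun k : ℝ => k ^ 2 / 4 + ν * (vhat k / vhat 0)) 0 := by
    simp [div_self hVne, hν]
  have hfpos : ∀ᶠ k in nhdsWithin 0 (Set.Ioi 0), 0 < f k := by
    have h1 : ∀ᶠ k in nhdsWithin 0 (Set.Ioi 0),
        0 < k ^ 2 / 4 + ν * (vhat k / vhat 0) :=
      ((hfquot.tendsto.mono_left nhdsWithin_le_nhds).eventually (lt_mem_nhds hfq0))
    filter_upwards [h1, self_mem_nhdsWithin] with k hk hk'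
    have hkpos : (0:ℝ) < k := Set.mem_Ioi.1 hk'
    have : f k = k ^ 2 * (k ^ 2 / 4 + ν * (vhat k / vhat 0)) := by
      simp only [hfdef]; ring
    rw [this]
    positivity
  have hBev : ∀ᶠ k in nhdsWithin (0:ℝ) (Set.Ioi 0), k ∈ B :=
    mem_nhdsWithin_of_mem_nhds (hBopen.mem_nhds h0B)
  obtain ⟨δ, hδmem, hδsub⟩ := mem_nhdsGT_iff_exists_Ioo_subset.1
    (hf3pos.and (hfpos.and hBev))
  have hδpos : 0 < δ := Set.mem_Ioi.1 hδmem
  set K := δ / 2 with hKdef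
  have hKpos : 0 < K := by positivity
  have hIccB : Set.Icc (0:ℝ) K ⊆ B := by
    intro x hx
    rcases eq_or_lt_of_le hx.1 with h | h
    · rw [← h]; exact h0B
    · exact (hδsub ⟨h, lt_of_le_of_lt hx.2 (by linarith)⟩).2.2
  have hIooK : ∀ x ∈ Set.Ioo (0:ℝ) K, x ∈ Set.Ioo (0:ℝ) δ := fun x hx =>
    ⟨hx.1, lt_trans hx.2 (by linarith)⟩
  -- g > 0 on (0, K]
  have hg0 : g 0 = 0 := by
    simp [hgdef, hfdef, hf1def]
  have hgmono : StrictMonoOn g (Set.Icc 0 K) := by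
    refine strictMonoOn_of_deriv_pos (convex_Icc 0 K) ?_ ?_
    · exact fun x hx => ((hDg x (hIccB hx)).continuousAt).continuousWithinAt
    · rw [interior_Icc]
      intro x hx
      rw [(hDg x (hIccB (Set.mem_Icc_of_Ioo hx))).deriv]
      have h := hδsub (hIooK x hx)
      have hf3x := h.1
      have hfx := h.2.1
      positivity
  have hgpos : ∀ x ∈ Set.Ioo (0:ℝ) K, 0 < g x := by
    intro x hx
    have := hgmono (Set.left_mem_Icc.2 hKpos.le) ⟨hx.1.le, hx.2.le⟩ hx.1
    rwa [hg0] at this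
  -- ω = √ f and its derivatives
  have hωeq : omegaBg ν vhat = fun k => Real.sqrt (f k) := rfl
  set ω1 : ℝ → ℝ := fun x => f1 x / (2 * Real.sqrt (f x)) with hω1def
  have hDω : ∀ x ∈ Set.Ioo (0:ℝ) K, HasDerivAt (omegaBg ν vhat) (ω1 x) x := by
    intro x hx
    have hfx : 0 < f x := (hδsub (hIooK x hx)).2.1
    rw [hωeq]
    exact (hDf x (hIccB (Set.mem_Icc_of_Ioo hx))).sqrt (ne_of_gt hfx)
  have hderiv_eq : ∀ x ∈ Set.Ioo (0:ℝ) K, deriv (omegaBg ν vhat) x = ω1 x :=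
    fun x hx => (hDω x hx).deriv
  have hdd : ∀ x ∈ Set.Ioo (0:ℝ) K, 0 < deriv (deriv (omegaBg ν vhat)) x := by
    intro x hx
    have hxB : x ∈ B := hIccB (Set.mem_Icc_of_Ioo hx)
    have hfx : 0 < f x := (hδsub (hIooK x hx)).2.1
    set s := Real.sqrt (f x) with hsdef
    have hs : 0 < s := Real.sqrt_pos.2 hfx
    have hs2 : s ^ 2 = f x := Real.sq_sqrt hfx.le
    have hden : 2 * s ≠ 0 := by positivity
    have hDω1 : HasDerivAt ω1
        ((f2 x * (2 * s) - f1 x * (2 * (f1 x / (2 * s)))) / (2 * s) ^ 2) x := by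
      have hd2s : HasDerivAt (fun y => 2 * Real.sqrt (f y)) (2 * (f1 x / (2 * s))) x :=
        ((hDf x hxB).sqrt (ne_of_gt hfx)).const_mul 2
      exact (hDf1 x hxB).div hd2s hden
    have hev : deriv (omegaBg ν vhat) =ᶠ[nhds x] ω1 :=
      Filter.eventuallyEq_of_mem (isOpen_Ioo.mem_nhds hx)
        (fun y hy => hderiv_eq y hy)
    rw [hev.deriv_eq, hDω1.deriv]
    have hnum : f2 x * (2 * s) - f1 x * (2 * (f1 x / (2 * s))) = g x / s := by
      have hgx : g x = 2 * s ^ 2 * f2 x - f1 x ^ 2 := by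
        simp only [hgdef]; rw [hs2]
      rw [hgx]
      field_simp
    rw [hnum]
    have hgx := hgpos x hx
    positivity
  refine ⟨K, hKpos, strictConvexOn_of_deriv2_pos (convex_Icc 0 K) ?_ ?_⟩
  · rw [hωeq]
    refine Real.continuous_sqrt.comp_continuousOn ?_
    exact fun x hx => ((hDf x (hIccB hx)).continuousAt).continuousWithinAt
  · rw [interior_Icc]
    intro x hx
    have := hdd x hx
    simpa [Function.iterate_succ, Function.comp] using this
end

section
/- For every θ > 0 the integral defining 𝓘(θ) converges and 𝓘(θ) = 32θ · [ 1/30 + 4 · ( (ζ(3) − Li₃(e^{−θ}))/θ³ − 6 (ζ(4) + Li₄(e^{−θ}))/θ⁴ + 12 (ζ(5) − Li₅(e^{−θ}))/θ⁵ ) ], where ζ is the Riemann zeta function and Liₙ(z) := Σ_{p=1}^∞ z^p / p^n. -/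
open MeasureTheory intervalIntegral Real Set


/-- The function `𝓘(θ)` of the Beliaev damping analysis. -/
noncomputable def calI (θ : ℝ) : ℝ :=
  θ * (1 - Real.exp (-θ)) * ∫ t in (-1:ℝ)..1,
    (1 - t ^ 2) ^ 2 /
      ((1 - Real.exp (-θ * (1 + t) / 2)) * (1 - Real.exp (-θ * (1 - t) / 2)))

/-- The real value of the Riemann zeta function at a natural argument. -/
noncomputable def zetaRe (n : ℕ) : ℝ := (riemannZeta n).re

/-- The polylogarithm `Liₙ(z) = Σ_{p=1}^∞ zᵖ/pⁿ` (of real argument). -/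
noncomputable def polylog (n : ℕ) (z : ℝ) : ℝ :=
  ∑' p : ℕ, z ^ (p + 1) / ((p : ℝ) + 1) ^ n

/-! ### zeta values -/

lemma summable_inv_pow (k : ℕ) (hk : 2 ≤ k) : Summable (fun p : ℕ => 1 / ((p:ℝ)+1) ^ k) := by
  have := (Real.summable_one_div_nat_pow (p := k)).mpr (by omega)
  simpa using (summable_nat_add_iff 1).mpr this

lemma zetaRe_eq (k : ℕ) (hk : 2 ≤ k) : zetaRe k = ∑' p : ℕ, 1 / ((p:ℝ)+1) ^ k := by
  have hs : 1 < (k:ℂ).re := by simp; exact_mod_cast lt_of_lt_of_le one_lt_two (by exact_mod_cast hk)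
  rw [zetaRe, zeta_eq_tsum_one_div_nat_add_one_cpow hs]
  have : ∀ p : ℕ, (1 / ((p:ℂ)+1) ^ (k:ℂ)) = ((1 / ((p:ℝ)+1)^k : ℝ) : ℂ) := by
    intro p
    rw [Complex.cpow_natCast]
    push_cast
    ring
  rw [tsum_congr this, Complex.re_tsum ((Complex.summable_ofReal).mpr (summable_inv_pow k hk))]
  exact tsum_congr (fun p => Complex.ofReal_re _)

lemma summable_polylog (k : ℕ) {x : ℝ} (hx0 : 0 ≤ x) (hx1 : x < 1) :
    Summable (fun p : ℕ => x ^ (p+1) / ((p:ℝ)+1) ^ k) := by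
  refine Summable.of_nonneg_of_le (fun p => by positivity) (fun p => ?_)
    (((summable_geometric_of_lt_one hx0 hx1).mul_left x))
  have h1 : (1:ℝ) ≤ ((p:ℝ)+1)^k := one_le_pow₀ (by norm_num [Nat.cast_nonneg])
  calc x ^ (p+1) / ((p:ℝ)+1) ^ k ≤ x ^ (p+1) / 1 := by
        apply div_le_div_of_nonneg_left (by positivity) one_pos h1
    _ = x * x ^ p := by rw [div_one]; ring

lemma hasSum_polylog (k : ℕ) {x : ℝ} (hx0 : 0 ≤ x) (hx1 : x < 1) :
    HasSum (fun p : ℕ => x ^ (p+1) / ((p:ℝ)+1) ^ k) (polylog k x) :=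
  (summable_polylog k hx0 hx1).hasSum

/-! ### antiderivatives and explicit integrals -/

lemma antideriv (c : ℝ) (hc : c ≠ 0) (t : ℝ) :
    HasDerivAt (fun t : ℝ =>
      ((-c^4*(1+t)^4 + (4*c^4-4*c^3)*(1+t)^3 + (-4*c^4+12*c^3-12*c^2)*(1+t)^2
        + (-8*c^3+24*c^2-24*c)*(1+t) + (-8*c^2+24*c-24))/c^5) * Real.exp (-c*(1+t)))
    ((1-t^2)^2 * Real.exp (-c*(1+t))) t := by
  have h1 : HasDerivAt (fun t : ℝ => 1 + t) 1 t := (hasDerivAt_id t).const_add 1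
  have hp : HasDerivAt (fun t : ℝ =>
      (-c^4*(1+t)^4 + (4*c^4-4*c^3)*(1+t)^3 + (-4*c^4+12*c^3-12*c^2)*(1+t)^2
        + (-8*c^3+24*c^2-24*c)*(1+t) + (-8*c^2+24*c-24))/c^5)
      ((-c^4*(4*(1+t)^3) + (4*c^4-4*c^3)*(3*(1+t)^2) + (-4*c^4+12*c^3-12*c^2)*(2*(1+t))
        + (-8*c^3+24*c^2-24*c))/c^5) t := by
    have : HasDerivAt (fun t : ℝ =>
        -c^4*(1+t)^4 + (4*c^4-4*c^3)*(1+t)^3 + (-4*c^4+12*c^3-12*c^2)*(1+t)^2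
          + (-8*c^3+24*c^2-24*c)*(1+t) + (-8*c^2+24*c-24))
        (-c^4*(4*(1+t)^3) + (4*c^4-4*c^3)*(3*(1+t)^2) + (-4*c^4+12*c^3-12*c^2)*(2*(1+t))
          + (-8*c^3+24*c^2-24*c)) t := by
      have h4 := ((h1.pow 4).const_mul (-c^4))
      have h3 := ((h1.pow 3).const_mul (4*c^4-4*c^3))
      have h2 := ((h1.pow 2).const_mul (-4*c^4+12*c^3-12*c^2))
      have hl := (h1.const_mul (-8*c^3+24*c^2-24*c))
      have := (((h4.add h3).add h2).add hl).add_const (-8*c^2+24*c-24)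
      refine this.congr_deriv ?_
      ring
    exact this.div_const _
  have he : HasDerivAt (fun t : ℝ => Real.exp (-c*(1+t))) (-c * Real.exp (-c*(1+t))) t := by
    have : HasDerivAt (fun t : ℝ => -c*(1+t)) (-c) t := by
      simpa using h1.const_mul (-c)
    simpa [mul_comm] using this.exp
  have := hp.mul he
  refine this.congr_deriv ?_
  field_simp
  ring

lemma Jval (c : ℝ) (hc : 0 < c) :
    ∫ t in (-1:ℝ)..1, (1-t^2)^2 * Real.exp (-c*(1+t)) =
      (8/c^3 - 24/c^4 + 24/c^5) - Real.exp (-(2*c)) * (8/c^3 + 24/c^4 + 24/c^5) := by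
  rw [intervalIntegral.integral_eq_sub_of_hasDerivAt
      (fun t _ => antideriv c hc.ne' t)
      (Continuous.intervalIntegrable (by continuity) _ _)]
  have h0 : Real.exp (-c*(1+(-1:ℝ))) = 1 := by norm_num
  rw [h0]
  have h2 : (-c*(1+(1:ℝ))) = -(2*c) := by ring
  rw [h2]
  field_simp
  ring

lemma Jval_mirror (c : ℝ) :
    ∫ t in (-1:ℝ)..1, (1-t^2)^2 * Real.exp (-c*(1-t)) =
      ∫ t in (-1:ℝ)..1, (1-t^2)^2 * Real.exp (-c*(1+t)) := by
  have := intervalIntegral.integral_comp_neg (a := (-1:ℝ)) (b := 1)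
    (fun t => (1-t^2)^2 * Real.exp (-c*(1+t)))
  simp only [neg_neg] at this
  rw [← this]
  congr 1
  ext t
  ring_nf

lemma poly_int : ∫ t in (-1:ℝ)..1, (1-t^2)^2 = 16/15 := by
  have : ∀ t ∈ Set.uIcc (-1:ℝ) 1, HasDerivAt (fun t : ℝ => t - 2*t^3/3 + t^5/5) ((1-t^2)^2) t := by
    intro t _
    have h := ((hasDerivAt_id t).sub (((hasDerivAt_pow 3 t).const_mul 2).div_const 3)).add
      ((hasDerivAt_pow 5 t).div_const 5)
    refine h.congr_deriv ?_
    push_cast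
    ring
  rw [intervalIntegral.integral_eq_sub_of_hasDerivAt this
      (Continuous.intervalIntegrable (by continuity) _ _)]
  norm_num

/-! ### bound and integrability of the integrand -/

lemma exp_lb {x : ℝ} : x * Real.exp (-x) ≤ 1 - Real.exp (-x) := by
  have h := Real.add_one_le_exp x
  have h2 : Real.exp (-x) * (x + 1) ≤ 1 := by
    rw [Real.exp_neg, inv_mul_le_iff₀ (Real.exp_pos x)]
    nlinarith [Real.exp_pos x]
  nlinarith

lemma f_bound (θ : ℝ) (hθ : 0 < θ) (t : ℝ) (ht : t ∈ Set.Icc (-1:ℝ) 1) :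
    ‖(1 - t ^ 2) ^ 2 /
      ((1 - Real.exp (-θ * (1 + t) / 2)) * (1 - Real.exp (-θ * (1 - t) / 2)))‖
      ≤ 4 * Real.exp θ / θ^2 := by
  obtain ⟨ht1, ht2⟩ := ht
  rcases eq_or_lt_of_le ht1 with h | h
  · simp [← h]; positivity
  rcases eq_or_lt_of_le ht2 with h2 | h2
  · simp [h2]; positivity
  rw [show -θ*(1+t)/2 = -(θ*(1+t)/2) by ring, show -θ*(1-t)/2 = -(θ*(1-t)/2) by ring]
  set a := θ * (1 + t) / 2 with ha
  set b := θ * (1 - t) / 2 with hb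
  have ha0 : 0 < a := by rw [ha]; nlinarith
  have hb0 : 0 < b := by rw [hb]; nlinarith
  have hD1 : a * Real.exp (-a) ≤ 1 - Real.exp (-a) := exp_lb
  have hD2 : b * Real.exp (-b) ≤ 1 - Real.exp (-b) := exp_lb
  have hD1p : 0 < 1 - Real.exp (-a) := lt_of_lt_of_le (by positivity) hD1
  have hD2p : 0 < 1 - Real.exp (-b) := lt_of_lt_of_le (by positivity) hD2
  have hab : Real.exp (-a) * Real.exp (-b) = Real.exp (-θ) := by
    rw [← Real.exp_add]; congr 1; rw [ha, hb]; ring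
  have hEE : Real.exp θ * Real.exp (-θ) = 1 := by rw [← Real.exp_add]; simp
  have hprod : (θ^2 * (1-t^2)/4) * Real.exp (-θ) ≤ (1 - Real.exp (-a)) * (1 - Real.exp (-b)) := by
    calc (θ^2 * (1-t^2)/4) * Real.exp (-θ) = a * Real.exp (-a) * (b * Real.exp (-b)) := by
          rw [← hab, ha, hb]; ring
      _ ≤ (1 - Real.exp (-a)) * (1 - Real.exp (-b)) :=
          mul_le_mul hD1 hD2 (by positivity) (le_of_lt hD1p)
  have hdenpos : 0 < (θ^2 * (1-t^2)/4) * Real.exp (-θ) := by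
    have : 0 < 1 - t^2 := by nlinarith
    positivity
  rw [Real.norm_eq_abs,
    abs_of_nonneg (div_nonneg (by positivity) (le_of_lt (mul_pos hD1p hD2p)))]
  calc (1 - t ^ 2) ^ 2 / ((1 - Real.exp (-a)) * (1 - Real.exp (-b)))
      ≤ (1 - t ^ 2) ^ 2 / ((θ^2 * (1-t^2)/4) * Real.exp (-θ)) :=
        div_le_div_of_nonneg_left (by positivity) hdenpos hprod
    _ ≤ 4 * Real.exp θ / θ^2 := by
        rw [div_le_iff₀ hdenpos]
        have h1t : 0 < 1 - t^2 := by nlinarith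
        have expand : 4 * Real.exp θ / θ ^ 2 * (θ ^ 2 * (1 - t ^ 2) / 4 * Real.exp (-θ))
            = (1 - t^2) * (Real.exp θ * Real.exp (-θ)) := by field_simp
        rw [expand, hEE]
        nlinarith

lemma f_meas (θ : ℝ) : Measurable (fun t : ℝ => (1 - t ^ 2) ^ 2 /
      ((1 - Real.exp (-θ * (1 + t) / 2)) * (1 - Real.exp (-θ * (1 - t) / 2)))) := by
  apply Measurable.div
  · fun_prop
  · apply Measurable.mul
    · exact (continuous_const.sub ((continuous_const.mul (continuous_const.add continuous_id)).div_const 2).rexp).measurable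
    · exact (continuous_const.sub ((continuous_const.mul (continuous_const.sub continuous_id)).div_const 2).rexp).measurable

lemma f_integrableOn (θ : ℝ) (hθ : 0 < θ) :
    IntegrableOn (fun t : ℝ => (1 - t ^ 2) ^ 2 /
      ((1 - Real.exp (-θ * (1 + t) / 2)) * (1 - Real.exp (-θ * (1 - t) / 2))))
      (Set.Ioc (-1:ℝ) 1) volume := by
  have hconst : IntegrableOn (fun _ : ℝ => 4 * Real.exp θ / θ^2) (Set.Ioc (-1:ℝ) 1) volume :=
    integrableOn_const measure_Ioc_lt_top.ne
  refine hconst.mono' ((f_meas θ).aestronglyMeasurable) ?_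
  filter_upwards [ae_restrict_mem measurableSet_Ioc] with t ht
  exact f_bound θ hθ t (Set.Ioc_subset_Icc_self ht)

lemma f_intervalIntegrable (θ : ℝ) (hθ : 0 < θ) :
    IntervalIntegrable (fun t : ℝ => (1 - t ^ 2) ^ 2 /
      ((1 - Real.exp (-θ * (1 + t) / 2)) * (1 - Real.exp (-θ * (1 - t) / 2))))
      volume (-1) 1 :=
  (intervalIntegrable_iff_integrableOn_Ioc_of_le (by norm_num)).mpr (f_integrableOn θ hθ)

/-! ### the summand functions -/

noncomputable def gfun (θ : ℝ) (p : ℕ) (t : ℝ) : ℝ :=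
  θ * (1 - t^2)^2 *
    ((Real.exp (-(θ*(1+t)/2)))^(p+1) + (Real.exp (-(θ*(1-t)/2)))^(p+1))

lemma gfun_nonneg (θ : ℝ) (hθ : 0 < θ) (p : ℕ) (t : ℝ) : 0 ≤ gfun θ p t := by
  unfold gfun; positivity

lemma gfun_cont (θ : ℝ) (p : ℕ) : Continuous (gfun θ p) := by
  unfold gfun
  continuity

lemma gfun_integral (θ : ℝ) (hθ : 0 < θ) (p : ℕ) :
    ∫ t in Set.Ioc (-1:ℝ) 1, gfun θ p t =
      128/θ^2 * (1/((p:ℝ)+1)^3) - 768/θ^3 * (1/((p:ℝ)+1)^4) + 1536/θ^4 * (1/((p:ℝ)+1)^5)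
      - ((Real.exp (-θ))^(p+1)) * (128/θ^2 * (1/((p:ℝ)+1)^3) + 768/θ^3 * (1/((p:ℝ)+1)^4)
          + 1536/θ^4 * (1/((p:ℝ)+1)^5)) := by
  set c : ℝ := ((p:ℝ)+1) * θ / 2 with hc
  have hc0 : 0 < c := by
    have : (0:ℝ) < (p:ℝ)+1 := by positivity
    rw [hc]; positivity
  have hgf : ∀ t : ℝ, gfun θ p t
      = θ * ((1 - t^2)^2 * Real.exp (-c*(1+t)) + (1 - t^2)^2 * Real.exp (-c*(1-t))) := by
    intro t
    have e1 : (Real.exp (-(θ*(1+t)/2)))^(p+1) = Real.exp (-c*(1+t)) := by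
      rw [← Real.exp_nat_mul]
      congr 1
      push_cast
      rw [hc]; ring
    have e2 : (Real.exp (-(θ*(1-t)/2)))^(p+1) = Real.exp (-c*(1-t)) := by
      rw [← Real.exp_nat_mul]
      congr 1
      push_cast
      rw [hc]; ring
    rw [gfun, e1, e2]; ring
  rw [MeasureTheory.setIntegral_congr_fun measurableSet_Ioc (fun t _ => hgf t)]
  rw [← intervalIntegral.integral_of_le (by norm_num : (-1:ℝ) ≤ 1)]
  rw [intervalIntegral.integral_const_mul]
  rw [intervalIntegral.integral_add
      (Continuous.intervalIntegrable (by continuity) _ _)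
      (Continuous.intervalIntegrable (by continuity) _ _)]
  rw [Jval c hc0, Jval_mirror c, Jval c hc0]
  have hexp : Real.exp (-(2*c)) = (Real.exp (-θ))^(p+1) := by
    rw [← Real.exp_nat_mul]
    congr 1
    push_cast
    rw [hc]; ring
  rw [hexp]
  have hp1 : ((p:ℝ)+1) ≠ 0 := by positivity
  rw [hc]
  field_simp
  ring

/-! ### pointwise series expansion -/

lemma gfun_hasSum (θ : ℝ) (hθ : 0 < θ) (t : ℝ) (ht : t ∈ Set.Ioc (-1:ℝ) 1) :
    HasSum (fun p => gfun θ p t)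
      (θ * (1 - Real.exp (-θ)) * ((1 - t ^ 2) ^ 2 /
          ((1 - Real.exp (-θ * (1 + t) / 2)) * (1 - Real.exp (-θ * (1 - t) / 2))))
        - θ * (1 - t^2)^2) := by
  obtain ⟨ht1, ht2⟩ := ht
  rcases eq_or_lt_of_le ht2 with h2 | h2
  · subst h2
    have : (fun p => gfun θ p (1:ℝ)) = (fun _ => (0:ℝ)) := by
      funext p; norm_num [gfun]
    rw [this]
    norm_num
  set x := Real.exp (-(θ*(1+t)/2)) with hxd
  set y := Real.exp (-(θ*(1-t)/2)) with hyd
  have hx0 : 0 < x := Real.exp_pos _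
  have hy0 : 0 < y := Real.exp_pos _
  have hx1 : x < 1 := by rw [hxd, Real.exp_lt_one_iff]; nlinarith
  have hy1 : y < 1 := by rw [hyd, Real.exp_lt_one_iff]; nlinarith
  have hxy : x * y = Real.exp (-θ) := by
    rw [hxd, hyd, ← Real.exp_add]; congr 1; ring
  have hsx : HasSum (fun p : ℕ => x^(p+1)) (x * (1-x)⁻¹) := by
    simpa [pow_succ, mul_comm] using (hasSum_geometric_of_lt_one (le_of_lt hx0) hx1).mul_left x
  have hsy : HasSum (fun p : ℕ => y^(p+1)) (y * (1-y)⁻¹) := by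
    simpa [pow_succ, mul_comm] using (hasSum_geometric_of_lt_one (le_of_lt hy0) hy1).mul_left y
  have h := (hsx.add hsy).mul_left (θ * (1 - t^2)^2)
  refine (congrArg (HasSum (fun p => gfun θ p t)) ?_).mp h
  rw [show -θ*(1+t)/2 = -(θ*(1+t)/2) by ring, show -θ*(1-t)/2 = -(θ*(1-t)/2) by ring,
    ← hxd, ← hyd, ← hxy]
  have hx1' : 1 - x ≠ 0 := by nlinarith
  have hy1' : 1 - y ≠ 0 := by nlinarith
  field_simp
  ring

/-! ### main theorem -/

/-- closed form of `𝓘(θ)` in terms of zeta values and polylogarithms. -/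
theorem stmt_9 (θ : ℝ) (hθ : 0 < θ) :
    IntervalIntegrable (fun t => (1 - t ^ 2) ^ 2 /
        ((1 - Real.exp (-θ * (1 + t) / 2)) * (1 - Real.exp (-θ * (1 - t) / 2))))
      MeasureTheory.volume (-1) 1 ∧
    calI θ = 32 * θ * (1 / 30 + 4 *
      ((zetaRe 3 - polylog 3 (Real.exp (-θ))) / θ ^ 3
        - 6 * (zetaRe 4 + polylog 4 (Real.exp (-θ))) / θ ^ 4
        + 12 * (zetaRe 5 - polylog 5 (Real.exp (-θ))) / θ ^ 5)) := by
  refine ⟨f_intervalIntegrable θ hθ, ?_⟩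
  set f : ℝ → ℝ := fun t => (1 - t ^ 2) ^ 2 /
      ((1 - Real.exp (-θ * (1 + t) / 2)) * (1 - Real.exp (-θ * (1 - t) / 2))) with hf
  set x := Real.exp (-θ) with hx
  have hx0 : 0 < x := Real.exp_pos _
  have hx1 : x < 1 := by rw [hx, Real.exp_lt_one_iff]; linarith
  set μ := volume.restrict (Set.Ioc (-1:ℝ) 1) with hμ
  -- integrability facts
  have hfI : Integrable f μ := f_integrableOn θ hθ
  have hpolyI : Integrable (fun t : ℝ => θ*(1-t^2)^2) μ :=
    Continuous.integrableOn_Ioc (by continuity)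
  have hFI : Integrable (fun t => θ*(1-x) * f t - θ*(1-t^2)^2) μ :=
    (hfI.const_mul _).sub hpolyI
  -- dominated convergence for the series
  have hHS := MeasureTheory.hasSum_integral_of_dominated_convergence
    (μ := μ) (F := gfun θ) (f := fun t => θ*(1-x) * f t - θ*(1-t^2)^2)
    (bound := gfun θ)
    (fun p => (gfun_cont θ p).aestronglyMeasurable)
    (fun p => ae_of_all _ (fun t => by
      rw [Real.norm_eq_abs, abs_of_nonneg (gfun_nonneg θ hθ p t)]))
    (by
      filter_upwards [ae_restrict_mem measurableSet_Ioc] with t ht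
      exact (gfun_hasSum θ hθ t ht).summable)
    (by
      refine hFI.congr ?_
      filter_upwards [ae_restrict_mem measurableSet_Ioc] with t ht
      exact (gfun_hasSum θ hθ t ht).tsum_eq.symm)
    (by
      filter_upwards [ae_restrict_mem measurableSet_Ioc] with t ht
      exact gfun_hasSum θ hθ t ht)
  -- rewrite the sequence of integrals
  rw [show (fun p => ∫ t, gfun θ p t ∂μ) = (fun p : ℕ =>
      128/θ^2 * (1/((p:ℝ)+1)^3) - 768/θ^3 * (1/((p:ℝ)+1)^4) + 1536/θ^4 * (1/((p:ℝ)+1)^5)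
      - (x^(p+1)) * (128/θ^2 * (1/((p:ℝ)+1)^3) + 768/θ^3 * (1/((p:ℝ)+1)^4)
          + 1536/θ^4 * (1/((p:ℝ)+1)^5))) from funext (fun p => gfun_integral θ hθ p)] at hHS
  -- compute the integral of the limit function
  have hIval : ∫ t, (θ*(1-x) * f t - θ*(1-t^2)^2) ∂μ
      = θ*(1-x) * (∫ t in (-1:ℝ)..1, f t) - θ * (16/15) := by
    rw [MeasureTheory.integral_sub (hfI.const_mul _) hpolyI,
      MeasureTheory.integral_const_mul, MeasureTheory.integral_const_mul,
      ← intervalIntegral.integral_of_le (by norm_num : (-1:ℝ) ≤ 1),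
      ← intervalIntegral.integral_of_le (by norm_num : (-1:ℝ) ≤ 1), poly_int]
  rw [hIval] at hHS
  -- the explicit sum
  have hz3 : HasSum (fun p : ℕ => 1/((p:ℝ)+1)^3) (zetaRe 3) := by
    rw [zetaRe_eq 3 (by norm_num)]; exact (summable_inv_pow 3 (by norm_num)).hasSum
  have hz4 : HasSum (fun p : ℕ => 1/((p:ℝ)+1)^4) (zetaRe 4) := by
    rw [zetaRe_eq 4 (by norm_num)]; exact (summable_inv_pow 4 (by norm_num)).hasSum
  have hz5 : HasSum (fun p : ℕ => 1/((p:ℝ)+1)^5) (zetaRe 5) := by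
    rw [zetaRe_eq 5 (by norm_num)]; exact (summable_inv_pow 5 (by norm_num)).hasSum
  have hl3 := hasSum_polylog 3 (le_of_lt hx0) hx1
  have hl4 := hasSum_polylog 4 (le_of_lt hx0) hx1
  have hl5 := hasSum_polylog 5 (le_of_lt hx0) hx1
  have hcomb := (((hz3.mul_left (128/θ^2)).sub (hz4.mul_left (768/θ^3))).add
      (hz5.mul_left (1536/θ^4))).sub
      (((hl3.mul_left (128/θ^2)).add (hl4.mul_left (768/θ^3))).add
        (hl5.mul_left (1536/θ^4)))
  have hcomb' : HasSum (fun p : ℕ =>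
      128/θ^2 * (1/((p:ℝ)+1)^3) - 768/θ^3 * (1/((p:ℝ)+1)^4) + 1536/θ^4 * (1/((p:ℝ)+1)^5)
      - (x^(p+1)) * (128/θ^2 * (1/((p:ℝ)+1)^3) + 768/θ^3 * (1/((p:ℝ)+1)^4)
          + 1536/θ^4 * (1/((p:ℝ)+1)^5)))
      ((128/θ^2 * zetaRe 3 - 768/θ^3 * zetaRe 4 + 1536/θ^4 * zetaRe 5)
        - (128/θ^2 * polylog 3 x + 768/θ^3 * polylog 4 x + 1536/θ^4 * polylog 5 x)) := by
    refine (congrArg (fun g => HasSum g _) ?_).mp hcomb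
    funext p
    ring
  have hkey := HasSum.unique hHS hcomb'
  rw [calI, ← hf, ← hx]
  have hθ' : θ ≠ 0 := hθ.ne'
  have : θ * (1 - x) * ∫ t in (-1:ℝ)..1, f t
      = θ * (16/15) + ((128/θ^2 * zetaRe 3 - 768/θ^3 * zetaRe 4 + 1536/θ^4 * zetaRe 5)
        - (128/θ^2 * polylog 3 x + 768/θ^3 * polylog 4 x + 1536/θ^4 * polylog 5 x)) := by
    linarith
  rw [this]
  field_simp
  ring
end

section
/- As θ → 0⁺ one has 𝓘(θ) → 16/3, and moreover 𝓘(θ) − 16/3 = O(θ) as θ → 0⁺. -/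
open Asymptotics Filter

lemma one_sub_exp_neg_le (x : ℝ) : 1 - Real.exp (-x) ≤ x := by
  nlinarith [Real.add_one_le_exp (-x)]

lemma le_one_sub_exp_neg (x : ℝ) (hx0 : 0 ≤ x) (hx1 : x ≤ 1) :
    x - x ^ 2 ≤ 1 - Real.exp (-x) := by
  have h := Real.abs_exp_sub_one_sub_id_le (x := -x) (by rw [abs_neg, abs_of_nonneg hx0]; exact hx1)
  rw [abs_le] at h
  nlinarith [h.2]

lemma prod_bound (u v : ℝ) (huv : 0 ≤ u * v) :
    u * v * (1 - (u + v)) ≤ (u - u ^ 2) * (v - v ^ 2) := by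
  nlinarith [sq_nonneg (u * v)]

set_option maxHeartbeats 1000000 in
lemma calI_bounds (θ : ℝ) (h0 : 0 < θ) (h1 : θ ≤ 1/2) :
    16/3 * (1 - θ) ≤ calI θ ∧ calI θ ≤ 16/3 * (1 + 2*θ) := by
  set F : ℝ → ℝ := fun t => (1 - t ^ 2) ^ 2 /
      ((1 - Real.exp (-θ * (1 + t) / 2)) * (1 - Real.exp (-θ * (1 - t) / 2))) with hF
  have hθ2 : (0:ℝ) < θ ^ 2 := by positivity
  -- lower pointwise bound
  have hFlow : ∀ t ∈ Set.Icc (-1:ℝ) 1, 4/θ^2 * (1 - t^2) ≤ F t := by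
    intro t ht
    obtain ⟨ht1, ht2⟩ := ht
    by_cases ht0 : 1 - t ^ 2 = 0
    · simp [hF, ht0]
    · have htpos : 0 < 1 - t ^ 2 := lt_of_le_of_ne (by nlinarith) (Ne.symm ht0)
      have ha0 : 0 < θ * (1 + t) / 2 := by nlinarith
      have hb0 : 0 < θ * (1 - t) / 2 := by nlinarith
      have hd1 : 0 < 1 - Real.exp (-(θ * (1 + t) / 2)) := by
        have := Real.exp_lt_one_iff.mpr (by linarith : -(θ * (1 + t) / 2) < 0); linarith
      have hd2 : 0 < 1 - Real.exp (-(θ * (1 - t) / 2)) := by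
        have := Real.exp_lt_one_iff.mpr (by linarith : -(θ * (1 - t) / 2) < 0); linarith
      have e1 : 1 - Real.exp (-(θ * (1 + t) / 2)) ≤ θ * (1 + t) / 2 := one_sub_exp_neg_le _
      have e2 : 1 - Real.exp (-(θ * (1 - t) / 2)) ≤ θ * (1 - t) / 2 := one_sub_exp_neg_le _
      have hrw1 : -θ * (1 + t) / 2 = -(θ * (1 + t) / 2) := by ring
      have hrw2 : -θ * (1 - t) / 2 = -(θ * (1 - t) / 2) := by ring
      rw [hF]
      simp only [hrw1, hrw2]
      rw [le_div_iff₀ (by positivity)]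
      calc 4/θ^2 * (1 - t^2) * ((1 - Real.exp (-(θ * (1 + t) / 2))) * (1 - Real.exp (-(θ * (1 - t) / 2))))
          ≤ 4/θ^2 * (1 - t^2) * ((θ * (1 + t) / 2) * (θ * (1 - t) / 2)) := by
            apply mul_le_mul_of_nonneg_left (mul_le_mul e1 e2 (le_of_lt hd2) (le_of_lt ha0)) (by positivity)
        _ = (1 - t^2)^2 := by field_simp; ring
  -- upper pointwise bound
  have hFup : ∀ t ∈ Set.Icc (-1:ℝ) 1, F t ≤ 4*(1+2*θ)/θ^2 * (1 - t^2) := by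
    intro t ht
    obtain ⟨ht1, ht2⟩ := ht
    by_cases ht0 : 1 - t ^ 2 = 0
    · simp [hF, ht0]
    · have htpos : 0 < 1 - t ^ 2 := lt_of_le_of_ne (by nlinarith) (Ne.symm ht0)
      have ha0 : 0 < θ * (1 + t) / 2 := by nlinarith
      have hb0 : 0 < θ * (1 - t) / 2 := by nlinarith
      have ha1 : θ * (1 + t) / 2 ≤ 1 := by nlinarith
      have hb1 : θ * (1 - t) / 2 ≤ 1 := by nlinarith
      have hd1 : 0 < 1 - Real.exp (-(θ * (1 + t) / 2)) := by
        have := Real.exp_lt_one_iff.mpr (by linarith : -(θ * (1 + t) / 2) < 0); linarith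
      have hd2 : 0 < 1 - Real.exp (-(θ * (1 - t) / 2)) := by
        have := Real.exp_lt_one_iff.mpr (by linarith : -(θ * (1 - t) / 2) < 0); linarith
      have e1 : θ * (1 + t) / 2 - (θ * (1 + t) / 2)^2 ≤ 1 - Real.exp (-(θ * (1 + t) / 2)) :=
        le_one_sub_exp_neg _ (le_of_lt ha0) ha1
      have e2 : θ * (1 - t) / 2 - (θ * (1 - t) / 2)^2 ≤ 1 - Real.exp (-(θ * (1 - t) / 2)) :=
        le_one_sub_exp_neg _ (le_of_lt hb0) hb1
      have hpa : 0 ≤ θ * (1 + t) / 2 - (θ * (1 + t) / 2)^2 := by nlinarith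
      have hpb : 0 ≤ θ * (1 - t) / 2 - (θ * (1 - t) / 2)^2 := by nlinarith
      have hd : θ^2 * (1 - t^2) * (1 - θ) / 4 ≤
          (1 - Real.exp (-(θ * (1 + t) / 2))) * (1 - Real.exp (-(θ * (1 - t) / 2))) := by
        calc θ^2 * (1 - t^2) * (1 - θ) / 4
            = (θ * (1 + t) / 2) * (θ * (1 - t) / 2) * (1 - ((θ * (1 + t) / 2) + (θ * (1 - t) / 2))) := by
              ring
          _ ≤ (θ * (1 + t) / 2 - (θ * (1 + t) / 2)^2) * (θ * (1 - t) / 2 - (θ * (1 - t) / 2)^2) :=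
              prod_bound _ _ (by positivity)
          _ ≤ _ := mul_le_mul e1 e2 hpb (le_of_lt hd1)
      have hrw1 : -θ * (1 + t) / 2 = -(θ * (1 + t) / 2) := by ring
      have hrw2 : -θ * (1 - t) / 2 = -(θ * (1 - t) / 2) := by ring
      rw [hF]
      simp only [hrw1, hrw2]
      rw [div_le_iff₀ (by positivity)]
      have h1' : (1 - t^2)^2 ≤ (1 + 2*θ) * (1 - θ) * (1 - t^2)^2 := by
        nlinarith [mul_nonneg (mul_nonneg h0.le (by linarith : (0:ℝ) ≤ 1 - 2*θ)) (sq_nonneg (1 - t^2))]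
      have h2' : (1 + 2*θ) * (1 - θ) * (1 - t^2)^2
          = 4*(1+2*θ)/θ^2 * (1 - t^2) * (θ^2 * (1 - t^2) * (1 - θ) / 4) := by
        field_simp
      have h3' : 4*(1+2*θ)/θ^2 * (1 - t^2) * (θ^2 * (1 - t^2) * (1 - θ) / 4)
          ≤ 4*(1+2*θ)/θ^2 * (1 - t^2) * ((1 - Real.exp (-(θ * (1 + t) / 2))) * (1 - Real.exp (-(θ * (1 - t) / 2)))) :=
        mul_le_mul_of_nonneg_left hd (by positivity)
      linarith
  -- integrability
  have hc1 : Continuous fun t : ℝ => (1 - t ^ 2) ^ 2 := by fun_prop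
  have hc2 : Continuous fun t : ℝ =>
      (1 - Real.exp (-θ * (1 + t) / 2)) * (1 - Real.exp (-θ * (1 - t) / 2)) := by fun_prop
  have hFmeas : Measurable F := hc1.measurable.div hc2.measurable
  have hFnonneg : ∀ t ∈ Set.Icc (-1:ℝ) 1, 0 ≤ F t := by
    intro t ht
    obtain ⟨ht1, ht2⟩ := ht
    apply div_nonneg (by positivity)
    have e1 : Real.exp (-θ * (1 + t) / 2) ≤ 1 := Real.exp_le_one_iff.mpr (by nlinarith)
    have e2 : Real.exp (-θ * (1 - t) / 2) ≤ 1 := Real.exp_le_one_iff.mpr (by nlinarith)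
    nlinarith
  have hFint : IntervalIntegrable F MeasureTheory.volume (-1) 1 := by
    rw [intervalIntegrable_iff_integrableOn_Ioc_of_le (by norm_num)]
    apply MeasureTheory.Integrable.mono' (g := fun _ => 8/θ^2)
      (MeasureTheory.integrableOn_const measure_Ioc_lt_top.ne)
      hFmeas.aestronglyMeasurable
    filter_upwards [MeasureTheory.ae_restrict_mem measurableSet_Ioc] with t ht
    have ht' : t ∈ Set.Icc (-1:ℝ) 1 := ⟨le_of_lt ht.1, ht.2⟩
    rw [Real.norm_eq_abs, abs_of_nonneg (hFnonneg t ht')]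
    calc F t ≤ 4*(1+2*θ)/θ^2 * (1 - t^2) := hFup t ht'
      _ ≤ 8/θ^2 := by
        rw [div_mul_eq_mul_div, div_le_div_iff₀ hθ2 hθ2]
        have hX : (1 + 2*θ) * (1 - t^2) ≤ 2 := by
          nlinarith [sq_nonneg t, mul_nonneg h0.le (sq_nonneg t)]
        nlinarith [mul_le_mul_of_nonneg_right hX hθ2.le]
  -- integrals of bounds
  have hint : ∀ c : ℝ, ∫ t in (-1:ℝ)..1, c * (1 - t^2) = c * (4/3) := by
    intro c
    rw [intervalIntegral.integral_const_mul]
    norm_num [intervalIntegral.integral_sub intervalIntegrable_const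
      (intervalIntegral.intervalIntegrable_pow 2), integral_pow]
  have hlowint : IntervalIntegrable (fun t => 4/θ^2 * (1 - t^2)) MeasureTheory.volume (-1) 1 := by
    apply IntervalIntegrable.const_mul
    exact intervalIntegrable_const.sub (intervalIntegral.intervalIntegrable_pow 2)
  have hupint : IntervalIntegrable (fun t => 4*(1+2*θ)/θ^2 * (1 - t^2)) MeasureTheory.volume (-1) 1 := by
    apply IntervalIntegrable.const_mul
    exact intervalIntegrable_const.sub (intervalIntegral.intervalIntegrable_pow 2)
  have hIlow : 4/θ^2 * (4/3) ≤ ∫ t in (-1:ℝ)..1, F t := by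
    rw [← hint (4/θ^2)]
    exact intervalIntegral.integral_mono_on (by norm_num) hlowint hFint hFlow
  have hIup : (∫ t in (-1:ℝ)..1, F t) ≤ 4*(1+2*θ)/θ^2 * (4/3) := by
    rw [← hint (4*(1+2*θ)/θ^2)]
    exact intervalIntegral.integral_mono_on (by norm_num) hFint hupint hFup
  have hInn : 0 ≤ ∫ t in (-1:ℝ)..1, F t := le_trans (by positivity) hIlow
  -- prefactor bounds
  have hP1 : θ * (1 - Real.exp (-θ)) ≤ θ^2 := by
    nlinarith [one_sub_exp_neg_le θ]
  have hP0 : θ^2 * (1 - θ) ≤ θ * (1 - Real.exp (-θ)) := by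
    nlinarith [le_one_sub_exp_neg θ (le_of_lt h0) (by linarith)]
  have hPnn : 0 ≤ θ * (1 - Real.exp (-θ)) := le_trans (by nlinarith) hP0
  have hcal : calI θ = θ * (1 - Real.exp (-θ)) * ∫ t in (-1:ℝ)..1, F t := rfl
  constructor
  · rw [hcal]
    calc (16:ℝ)/3 * (1 - θ) = θ^2 * (1 - θ) * (4/θ^2 * (4/3)) := by field_simp; ring
      _ ≤ θ * (1 - Real.exp (-θ)) * ∫ t in (-1:ℝ)..1, F t :=
        mul_le_mul hP0 hIlow (by positivity) hPnn
  · rw [hcal]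
    calc θ * (1 - Real.exp (-θ)) * (∫ t in (-1:ℝ)..1, F t)
        ≤ θ^2 * (4*(1+2*θ)/θ^2 * (4/3)) := mul_le_mul hP1 hIup hInn (by positivity)
      _ = 16/3 * (1 + 2*θ) := by field_simp; ring

/-- `𝓘(θ) → 16/3` as `θ → 0⁺`, with error `O(θ)`. -/
theorem stmt_10 :
    Tendsto calI (nhdsWithin 0 (Set.Ioi 0)) (nhds (16 / 3)) ∧
    (fun θ => calI θ - 16 / 3) =O[nhdsWithin 0 (Set.Ioi 0)] fun θ : ℝ => θ := by
  have hev : ∀ᶠ θ in nhdsWithin (0:ℝ) (Set.Ioi 0), θ ∈ Set.Ioc (0:ℝ) (1/2) :=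
    Ioc_mem_nhdsGT_of_mem (by norm_num)
  constructor
  · have hg : Tendsto (fun θ : ℝ => 16/3 * (1 - θ)) (nhdsWithin 0 (Set.Ioi 0)) (nhds (16/3)) :=
      ((show Continuous fun θ : ℝ => 16/3 * (1 - θ) by continuity).tendsto' 0 (16/3)
        (by norm_num)).mono_left nhdsWithin_le_nhds
    have hh : Tendsto (fun θ : ℝ => 16/3 * (1 + 2*θ)) (nhdsWithin 0 (Set.Ioi 0)) (nhds (16/3)) :=
      ((show Continuous fun θ : ℝ => 16/3 * (1 + 2*θ) by continuity).tendsto' 0 (16/3)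
        (by norm_num)).mono_left nhdsWithin_le_nhds
    apply tendsto_of_tendsto_of_tendsto_of_le_of_le' hg hh
    · filter_upwards [hev] with θ hθ
      exact (calI_bounds θ hθ.1 hθ.2).1
    · filter_upwards [hev] with θ hθ
      exact (calI_bounds θ hθ.1 hθ.2).2
  · rw [isBigO_iff]
    refine ⟨32/3, ?_⟩
    filter_upwards [hev] with θ hθ
    obtain ⟨hl, hu⟩ := calI_bounds θ hθ.1 hθ.2
    rw [Real.norm_eq_abs, Real.norm_eq_abs, abs_of_pos hθ.1, abs_le]
    constructor <;> nlinarith [hθ.1, hθ.2]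
end

section
/- As θ → +∞ one has 𝓘(θ) − (16/15)θ = O(θ^{−2}). -/
open Asymptotics Filter

section Aux
open Real MeasureTheory intervalIntegral
set_option maxHeartbeats 1000000

lemma intG : ∫ t in (-1:ℝ)..1, (1 - t ^ 2) ^ 2 = 16/15 := by
  have h : ∀ x ∈ Set.uIcc (-1:ℝ) 1, HasDerivAt (fun t : ℝ => t - 2/3*t^3 + 1/5*t^5)
      ((1 - x ^ 2) ^ 2) x := by
    intro x _
    have h1 : HasDerivAt (fun t : ℝ => t - 2/3*t^3 + 1/5*t^5)
        (1 - 2/3*(3*x^2) + 1/5*(5*x^4)) x := by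
      exact ((hasDerivAt_id x).sub (((hasDerivAt_pow 3 x)).const_mul (2/3))).add
        (((hasDerivAt_pow 5 x)).const_mul (1/5)) |>.congr_deriv (by push_cast; ring)
    convert h1 using 1; ring
  rw [integral_eq_sub_of_hasDerivAt h (by apply Continuous.intervalIntegrable; continuity)]
  norm_num

lemma intPhi (c : ℝ) (hc : 1 ≤ c) :
    ∫ t in (-1:ℝ)..1, ((c*(1-t)/2)^2 + c*(1-t)/2) * Real.exp (-(c*(1-t)/2)) ≤ 6 / c := by
  have hc0 : (0:ℝ) < c := by linarith
  set F : ℝ → ℝ := fun t => (2/c)*((c*(1-t)/2)^2+3*(c*(1-t)/2)+3)*Real.exp (-(c*(1-t)/2)) with hF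
  have h : ∀ x ∈ Set.uIcc (-1:ℝ) 1, HasDerivAt F
      (((c*(1-x)/2)^2 + c*(1-x)/2) * Real.exp (-(c*(1-x)/2))) x := by
    intro x _
    have hu : HasDerivAt (fun t : ℝ => c*(1-t)/2) (-(c/2)) x := by
      have h2 : HasDerivAt (fun t : ℝ => c/2 - c/2 * t) (-(c/2)) x := by
        simpa using ((hasDerivAt_id x).const_mul (c/2)).const_sub (c/2)
      have : (fun t : ℝ => c*(1-t)/2) = (fun t : ℝ => c/2 - c/2 * t) := by funext t; ring
      rw [this]; exact h2
    set y := c*(1-x)/2 with hy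
    have hpoly : HasDerivAt (fun z : ℝ => (2/c)*(z^2+3*z+3)) ((2/c)*(2*y+3)) y := by
      have : HasDerivAt (fun z : ℝ => z^2+3*z+3) (2*y+3) y := by
        simpa [add_assoc, Pi.add_def] using ((hasDerivAt_pow 2 y).add (((hasDerivAt_id y).const_mul 3).add_const 3))
      simpa [mul_comm, mul_assoc] using this.const_mul (2/c)
    have hexp : HasDerivAt (fun z : ℝ => Real.exp (-z)) (-Real.exp (-y)) y := by
      simpa [Function.comp_def] using (Real.hasDerivAt_exp (-y)).comp y ((hasDerivAt_id y).neg)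
    have hpsi : HasDerivAt (fun z : ℝ => (2/c)*(z^2+3*z+3)*Real.exp (-z))
        ((2/c)*(2*y+3)*Real.exp (-y) + (2/c)*(y^2+3*y+3)*(-Real.exp (-y))) y :=
      hpoly.mul hexp
    have hcomp := hpsi.comp x hu
    have : ((2/c)*(2*y+3)*Real.exp (-y) + (2/c)*(y^2+3*y+3)*(-Real.exp (-y))) * (-(c/2))
        = (y^2 + y) * Real.exp (-y) := by field_simp; ring
    rw [this] at hcomp
    exact hcomp
  rw [integral_eq_sub_of_hasDerivAt h (by apply Continuous.intervalIntegrable; continuity)]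
  have he : 0 ≤ Real.exp (-(c*(1-(-1:ℝ))/2)) := (Real.exp_pos _).le
  have hq : 0 ≤ (c*(1-(-1:ℝ))/2)^2+3*(c*(1-(-1:ℝ))/2)+3 := by positivity
  have : F 1 = 6/c := by simp [hF]; norm_num; ring
  rw [this]
  have : 0 ≤ F (-1) := by
    simp only [hF]; positivity
  linarith

lemma intPhi' (c : ℝ) (hc : 1 ≤ c) :
    ∫ t in (-1:ℝ)..1, ((c*(1+t)/2)^2 + c*(1+t)/2) * Real.exp (-(c*(1+t)/2)) ≤ 6 / c := by
  have h := intervalIntegral.integral_comp_neg (a := (-1:ℝ)) (b := 1)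
      (fun x => ((c*(1-x)/2)^2 + c*(1-x)/2) * Real.exp (-(c*(1-x)/2)))
  norm_num at h
  rw [h]
  exact intPhi c hc

lemma key_upper (θ t : ℝ) (hθ : 1 ≤ θ) (ht : t ∈ Set.Icc (-1:ℝ) 1) :
    (1 - t ^ 2) ^ 2 /
      ((1 - Real.exp (-θ * (1 + t) / 2)) * (1 - Real.exp (-θ * (1 - t) / 2)))
    ≤ (1 - t^2)^2 + 32/θ^2 *
      ( ((θ*(1-t)/2)^2 + θ*(1-t)/2) * Real.exp (-(θ*(1-t)/2))
      + ((θ*(1+t)/2)^2 + θ*(1+t)/2) * Real.exp (-(θ*(1+t)/2)) ) := by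
  have hθ0 : (0:ℝ) < θ := by linarith
  obtain ⟨ht1, ht2⟩ := ht
  have htail : (0:ℝ) ≤ 32/θ^2 *
      ( ((θ*(1-t)/2)^2 + θ*(1-t)/2) * Real.exp (-(θ*(1-t)/2))
      + ((θ*(1+t)/2)^2 + θ*(1+t)/2) * Real.exp (-(θ*(1+t)/2)) ) := by
    have h1 : (0:ℝ) ≤ θ*(1-t)/2 := by nlinarith
    have h2 : (0:ℝ) ≤ θ*(1+t)/2 := by nlinarith
    positivity
  have htail2 : (0:ℝ) ≤ 32/θ^2 * ((θ^2+θ) * Real.exp (-θ)) :=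
    mul_nonneg (by positivity) (mul_nonneg (by nlinarith) (Real.exp_pos _).le)
  rcases eq_or_lt_of_le ht2 with h | ht2'
  · subst h
    norm_num
    exact htail2
  rcases eq_or_lt_of_le ht1 with h | ht1'
  · rw [← h]
    norm_num
    exact htail2
  -- interior case
  obtain ⟨u, hu_def⟩ : ∃ u, u = θ*(1-t)/2 := ⟨_, rfl⟩
  obtain ⟨v, hv_def⟩ : ∃ v, v = θ*(1+t)/2 := ⟨_, rfl⟩
  obtain ⟨a, ha_def⟩ : ∃ a, a = Real.exp (-v) := ⟨_, rfl⟩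
  obtain ⟨b, hb_def⟩ : ∃ b, b = Real.exp (-u) := ⟨_, rfl⟩
  rw [← hu_def, ← hv_def, ← ha_def, ← hb_def]
  have hrw1 : Real.exp (-θ * (1 + t) / 2) = a := by rw [ha_def]; congr 1; rw [hv_def]; ring
  have hrw2 : Real.exp (-θ * (1 - t) / 2) = b := by rw [hb_def]; congr 1; rw [hu_def]; ring
  rw [hrw1, hrw2]
  have hu0 : 0 < u := by rw [hu_def]; nlinarith
  have hv0 : 0 < v := by rw [hv_def]; nlinarith
  have huv : u + v = θ := by rw [hu_def, hv_def]; ring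
  have ha0 : 0 < a := ha_def ▸ Real.exp_pos _
  have hb0 : 0 < b := hb_def ▸ Real.exp_pos _
  have ha1 : a < 1 := by rw [ha_def]; apply Real.exp_lt_one_iff.mpr; linarith
  have hb1 : b < 1 := by rw [hb_def]; apply Real.exp_lt_one_iff.mpr; linarith
  have hP1 : v ≤ (1 - a) * (v + 1) := by
    have h1 : v + 1 ≤ Real.exp v := by linarith [Real.add_one_le_exp v]
    have h3 : a * Real.exp v = 1 := by rw [ha_def, ← Real.exp_add]; simp
    nlinarith
  have hP2 : u ≤ (1 - b) * (u + 1) := by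
    have h1 : u + 1 ≤ Real.exp u := by linarith [Real.add_one_le_exp u]
    have h3 : b * Real.exp u = 1 := by rw [hb_def, ← Real.exp_add]; simp
    nlinarith
  have hD : 0 < (1 - a) * (1 - b) := by nlinarith
  rw [div_le_iff₀ hD]
  have e1 : θ*(1-t) = 2*u := by rw [hu_def]; ring
  have e2 : θ*(1+t) = 2*v := by rw [hv_def]; ring
  have hg4 : (1 - t^2)^2 * θ^4 = 16*u^2*v^2 := by
    calc (1 - t^2)^2 * θ^4 = (θ*(1-t))^2 * (θ*(1+t))^2 := by ring
      _ = (2*u)^2 * (2*v)^2 := by rw [e1, e2]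
      _ = 16*u^2*v^2 := by ring
  have hθ4 : (0:ℝ) < θ^4 := by positivity
  have hg : (1 - t^2)^2 = 16*u^2*v^2/θ^4 := by rw [eq_div_iff (ne_of_gt hθ4)]; exact hg4
  have hvθ : v ≤ θ := by linarith
  have huθ : u ≤ θ := by linarith
  have hθθ : θ ≤ θ^2 := by nlinarith [sq_nonneg (θ - 1)]
  have hv2 : v * (v + 1) ≤ 2 * θ^2 := by
    nlinarith [mul_self_le_mul_self hv0.le hvθ]
  have hu2 : u * (u + 1) ≤ 2 * θ^2 := by
    nlinarith [mul_self_le_mul_self hu0.le huθ]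
  obtain ⟨G, hG_def⟩ : ∃ G, G = 16*u^2*v^2 := ⟨_, rfl⟩
  obtain ⟨S, hS_def⟩ : ∃ S, S = 32*θ^2*((u^2+u)*b + (v^2+v)*a) := ⟨_, rfl⟩
  have hG0 : 0 ≤ G := by rw [hG_def]; positivity
  have hS0 : 0 ≤ S := by rw [hS_def]; positivity
  have key1 : u * v ≤ (1 - a) * (1 - b) * ((u + 1) * (v + 1)) := by
    have h1 : v * u ≤ ((1 - a) * (v + 1)) * ((1 - b) * (u + 1)) :=
      mul_le_mul hP1 hP2 hu0.le (by nlinarith)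
    nlinarith [h1]
  have key2 : G * (a + b) * ((u + 1) * (v + 1)) ≤ S * (u * v) := by
    have c1 : (0:ℝ) ≤ 16*u^2*v*(u+1)*b := by positivity
    have c2 : (0:ℝ) ≤ 16*u*v^2*(v+1)*a := by positivity
    have hbpart : 16*u^2*v^2 * b * ((u + 1) * (v + 1)) ≤ 32*θ^2*(u^2+u)*b * (u*v) := by
      calc 16*u^2*v^2 * b * ((u + 1) * (v + 1)) = 16*u^2*v*(u+1)*b * (v*(v+1)) := by ring
        _ ≤ 16*u^2*v*(u+1)*b * (2*θ^2) := mul_le_mul_of_nonneg_left hv2 c1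
        _ = 32*θ^2*(u^2+u)*b * (u*v) := by ring
    have hapart : 16*u^2*v^2 * a * ((u + 1) * (v + 1)) ≤ 32*θ^2*(v^2+v)*a * (u*v) := by
      calc 16*u^2*v^2 * a * ((u + 1) * (v + 1)) = 16*u*v^2*(v+1)*a * (u*(u+1)) := by ring
        _ ≤ 16*u*v^2*(v+1)*a * (2*θ^2) := mul_le_mul_of_nonneg_left hu2 c2
        _ = 32*θ^2*(v^2+v)*a * (u*v) := by ring
    calc G * (a + b) * ((u + 1) * (v + 1))
        = 16*u^2*v^2 * b * ((u + 1) * (v + 1)) + 16*u^2*v^2 * a * ((u + 1) * (v + 1)) := by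
          rw [hG_def]; ring
      _ ≤ 32*θ^2*(u^2+u)*b * (u*v) + 32*θ^2*(v^2+v)*a * (u*v) := add_le_add hbpart hapart
      _ = S * (u * v) := by rw [hS_def]; ring
  have key3 : G * (a + b) ≤ S * ((1 - a) * (1 - b)) := by
    have h2 : G * (a + b) * ((u + 1) * (v + 1)) ≤ S * ((1 - a) * (1 - b)) * ((u + 1) * (v + 1)) := by
      calc G * (a + b) * ((u + 1) * (v + 1)) ≤ S * (u * v) := key2
        _ ≤ S * ((1 - a) * (1 - b) * ((u + 1) * (v + 1))) := mul_le_mul_of_nonneg_left key1 hS0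
        _ = S * ((1 - a) * (1 - b)) * ((u + 1) * (v + 1)) := by ring
    have hpos : 0 < (u + 1) * (v + 1) := mul_pos (by linarith) (by linarith)
    exact le_of_mul_le_mul_right h2 hpos
  have main : G ≤ (G + S) * ((1 - a) * (1 - b)) := by
    have hab : 0 ≤ G * (a * b) := mul_nonneg hG0 (mul_nonneg ha0.le hb0.le)
    calc G = G * ((1 - a) * (1 - b)) + G * (a + b) - G * (a * b) := by ring
      _ ≤ G * ((1 - a) * (1 - b)) + S * ((1 - a) * (1 - b)) := by linarith [key3, hab]
      _ = (G + S) * ((1 - a) * (1 - b)) := by ring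
  have hSdiv : S / θ^4 = 32/θ^2 * ((u^2+u)*b + (v^2+v)*a) := by
    rw [hS_def]; field_simp
  calc (1 - t^2)^2 = G / θ^4 := by rw [hg, hG_def]
    _ ≤ ((G + S) * ((1 - a) * (1 - b))) / θ^4 := by
        gcongr 
    _ = (G/θ^4 + S/θ^4) * ((1 - a) * (1 - b)) := by ring
    _ = ((1 - t^2)^2 + 32/θ^2 * ((u^2+u)*b + (v^2+v)*a)) * ((1-a)*(1-b)) := by
        rw [hg, hG_def, hSdiv]

noncomputable def fI (θ t : ℝ) : ℝ :=
  (1 - t ^ 2) ^ 2 /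
      ((1 - Real.exp (-θ * (1 + t) / 2)) * (1 - Real.exp (-θ * (1 - t) / 2)))

noncomputable def bI (θ t : ℝ) : ℝ :=
  (1 - t^2)^2 + 32/θ^2 *
      ( ((θ*(1-t)/2)^2 + θ*(1-t)/2) * Real.exp (-(θ*(1-t)/2))
      + ((θ*(1+t)/2)^2 + θ*(1+t)/2) * Real.exp (-(θ*(1+t)/2)) )

lemma key_lower (θ t : ℝ) (hθ : 1 ≤ θ) (ht : t ∈ Set.Icc (-1:ℝ) 1) :
    (1 - t^2)^2 ≤ fI θ t := by
  have hθ0 : (0:ℝ) < θ := by linarith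
  obtain ⟨ht1, ht2⟩ := ht
  unfold fI
  rcases eq_or_lt_of_le ht2 with h | ht2'
  · subst h; norm_num
  rcases eq_or_lt_of_le ht1 with h | ht1'
  · rw [← h]; norm_num
  have ha0 : 0 < Real.exp (-θ * (1 + t) / 2) := Real.exp_pos _
  have ha1 : Real.exp (-θ * (1 + t) / 2) < 1 := by
    apply Real.exp_lt_one_iff.mpr; nlinarith
  have hb0 : 0 < Real.exp (-θ * (1 - t) / 2) := Real.exp_pos _
  have hb1 : Real.exp (-θ * (1 - t) / 2) < 1 := by
    apply Real.exp_lt_one_iff.mpr; nlinarith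
  have hD : 0 < (1 - Real.exp (-θ * (1 + t) / 2)) * (1 - Real.exp (-θ * (1 - t) / 2)) := by
    nlinarith
  rw [le_div_iff₀ hD]
  have hD1 : (1 - Real.exp (-θ * (1 + t) / 2)) * (1 - Real.exp (-θ * (1 - t) / 2)) ≤ 1 := by
    nlinarith
  have hg : (0:ℝ) ≤ (1 - t^2)^2 := by positivity
  nlinarith

lemma fI_nonneg (θ t : ℝ) (hθ : 1 ≤ θ) (ht : t ∈ Set.Icc (-1:ℝ) 1) : 0 ≤ fI θ t := by
  obtain ⟨ht1, ht2⟩ := ht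
  have h1 : Real.exp (-θ * (1 + t) / 2) ≤ 1 := Real.exp_le_one_iff.mpr (by nlinarith)
  have h2 : Real.exp (-θ * (1 - t) / 2) ≤ 1 := Real.exp_le_one_iff.mpr (by nlinarith)
  apply div_nonneg (by positivity)
  nlinarith

lemma bI_cont (θ : ℝ) : Continuous (bI θ) := by
  unfold bI; continuity

lemma fI_meas (θ : ℝ) : Measurable (fI θ) := by
  unfold fI
  apply Measurable.div
  · exact (by continuity : Continuous fun t : ℝ => (1 - t^2)^2).measurable
  · exact (by continuity : Continuous fun t : ℝ =>
      (1 - Real.exp (-θ * (1 + t) / 2)) * (1 - Real.exp (-θ * (1 - t) / 2))).measurable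

lemma fI_intble (θ : ℝ) (hθ : 1 ≤ θ) : IntervalIntegrable (fI θ) volume (-1) 1 := by
  rw [intervalIntegrable_iff_integrableOn_Icc_of_le (by norm_num : (-1:ℝ) ≤ 1)]
  apply MeasureTheory.Integrable.mono' ((bI_cont θ).integrableOn_Icc)
    (fI_meas θ).aestronglyMeasurable
  rw [ae_restrict_iff' measurableSet_Icc]
  filter_upwards with x hx
  rw [Real.norm_eq_abs, abs_of_nonneg (fI_nonneg θ x hθ hx)]
  exact key_upper θ x hθ hx

lemma intF_lower (θ : ℝ) (hθ : 1 ≤ θ) : 16/15 ≤ ∫ t in (-1:ℝ)..1, fI θ t := by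
  rw [← intG]
  apply intervalIntegral.integral_mono_on (by norm_num : (-1:ℝ) ≤ 1)
    (by apply Continuous.intervalIntegrable; continuity) (fI_intble θ hθ)
  intro x hx
  exact key_lower θ x hθ hx

lemma intF_upper (θ : ℝ) (hθ : 1 ≤ θ) :
    ∫ t in (-1:ℝ)..1, fI θ t ≤ 16/15 + 384/θ^3 := by
  have hθ0 : (0:ℝ) < θ := by linarith
  have hint1 : IntervalIntegrable (fun t : ℝ => (1-t^2)^2) volume (-1) 1 := by
    apply Continuous.intervalIntegrable; continuity
  have hint2 : IntervalIntegrable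
      (fun t : ℝ => ((θ*(1-t)/2)^2 + θ*(1-t)/2) * Real.exp (-(θ*(1-t)/2))) volume (-1) 1 := by
    apply Continuous.intervalIntegrable; continuity
  have hint3 : IntervalIntegrable
      (fun t : ℝ => ((θ*(1+t)/2)^2 + θ*(1+t)/2) * Real.exp (-(θ*(1+t)/2))) volume (-1) 1 := by
    apply Continuous.intervalIntegrable; continuity
  have step1 : ∫ t in (-1:ℝ)..1, fI θ t ≤ ∫ t in (-1:ℝ)..1, bI θ t := by
    apply intervalIntegral.integral_mono_on (by norm_num : (-1:ℝ) ≤ 1)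
      (fI_intble θ hθ) ((bI_cont θ).intervalIntegrable _ _)
    intro x hx
    exact key_upper θ x hθ hx
  have step2 : ∫ t in (-1:ℝ)..1, bI θ t
      = (∫ t in (-1:ℝ)..1, (1-t^2)^2)
      + 32/θ^2 * ((∫ t in (-1:ℝ)..1, ((θ*(1-t)/2)^2 + θ*(1-t)/2) * Real.exp (-(θ*(1-t)/2)))
                + (∫ t in (-1:ℝ)..1, ((θ*(1+t)/2)^2 + θ*(1+t)/2) * Real.exp (-(θ*(1+t)/2)))) := by
    unfold bI
    rw [intervalIntegral.integral_add hint1 ((hint2.add hint3).const_mul _),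
      intervalIntegral.integral_const_mul, intervalIntegral.integral_add hint2 hint3]
  have h6 : (∫ t in (-1:ℝ)..1, ((θ*(1-t)/2)^2 + θ*(1-t)/2) * Real.exp (-(θ*(1-t)/2)))
                + (∫ t in (-1:ℝ)..1, ((θ*(1+t)/2)^2 + θ*(1+t)/2) * Real.exp (-(θ*(1+t)/2)))
      ≤ 12 / θ := by
    have := intPhi θ hθ
    have := intPhi' θ hθ
    have : (6:ℝ)/θ + 6/θ = 12/θ := by ring
    linarith [intPhi θ hθ, intPhi' θ hθ]
  have h7 : 32/θ^2 * ((∫ t in (-1:ℝ)..1, ((θ*(1-t)/2)^2 + θ*(1-t)/2) * Real.exp (-(θ*(1-t)/2)))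
                + (∫ t in (-1:ℝ)..1, ((θ*(1+t)/2)^2 + θ*(1+t)/2) * Real.exp (-(θ*(1+t)/2))))
      ≤ 384/θ^3 := by
    have h8 : 32/θ^2 * (12/θ) = 384/θ^3 := by field_simp; ring
    calc _ ≤ 32/θ^2 * (12/θ) := mul_le_mul_of_nonneg_left h6 (by positivity)
      _ = 384/θ^3 := h8
  rw [intG] at step2
  linarith [step1, step2.le, h7, step2.ge]

end Aux

open Real MeasureTheory in
set_option maxHeartbeats 1000000 in
/-- `𝓘(θ) = (16/15)θ + O(θ⁻²)` as `θ → +∞`. -/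
theorem stmt_11 :
    (fun θ => calI θ - 16 / 15 * θ) =O[atTop] fun θ : ℝ => 1 / θ ^ 2 := by
  rw [Asymptotics.isBigO_iff]
  use 3334
  filter_upwards [eventually_ge_atTop (1:ℝ)] with θ hθ
  have hθ0 : (0:ℝ) < θ := by linarith
  have hcal : calI θ = θ * (1 - Real.exp (-θ)) * ∫ t in (-1:ℝ)..1, fI θ t := rfl
  have hI1 : 16/15 ≤ ∫ t in (-1:ℝ)..1, fI θ t := intF_lower θ hθ
  have hI2 : (∫ t in (-1:ℝ)..1, fI θ t) ≤ 16/15 + 384/θ^3 := intF_upper θ hθ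
  obtain ⟨I, hI_def⟩ : ∃ I, I = ∫ t in (-1:ℝ)..1, fI θ t := ⟨_, rfl⟩
  rw [← hI_def] at hcal hI1 hI2
  obtain ⟨E, hE_def⟩ : ∃ E, E = Real.exp (-θ) := ⟨_, rfl⟩
  rw [← hE_def] at hcal
  have hE0 : 0 < E := hE_def ▸ Real.exp_pos _
  have hE1 : E < 1 := by rw [hE_def]; exact Real.exp_lt_one_iff.mpr (by linarith)
  -- exp lower bound
  have hexp5 : θ^5/3125 ≤ Real.exp θ := by
    have h1 : θ/5 + 1 ≤ Real.exp (θ/5) := by linarith [Real.add_one_le_exp (θ/5)]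
    have h2 : (θ/5)^5 ≤ (Real.exp (θ/5))^5 :=
      pow_le_pow_left₀ (by positivity) (by linarith) 5
    have h3 : (Real.exp (θ/5))^5 = Real.exp θ := by
      rw [← Real.exp_nat_mul]; congr 1; push_cast; ring
    calc θ^5/3125 = (θ/5)^5 := by ring
      _ ≤ (Real.exp (θ/5))^5 := h2
      _ = Real.exp θ := h3
  have hE : E ≤ 3125/θ^5 := by
    rw [hE_def, Real.exp_neg]
    have h4 : (Real.exp θ)⁻¹ ≤ (θ^5/3125)⁻¹ := by
      gcongr
    calc (Real.exp θ)⁻¹ ≤ (θ^5/3125)⁻¹ := h4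
      _ = 3125/θ^5 := by rw [inv_div]
  -- bounds on the difference
  have hIpos : 0 ≤ I := by linarith
  have e1 : θ * (16/15 + 384/θ^3) = 16/15*θ + 384/θ^2 := by field_simp
  have up : θ * (1 - E) * I - 16/15*θ ≤ 384/θ^2 := by
    have h1 : θ * (1 - E) * I ≤ θ * I := by
      nlinarith [mul_nonneg (mul_nonneg hθ0.le hE0.le) hIpos]
    have h2 : θ * I ≤ θ * (16/15 + 384/θ^3) := mul_le_mul_of_nonneg_left hI2 hθ0.le
    rw [e1] at h2
    linarith
  have lo : -(3334/θ^2) ≤ θ * (1 - E) * I - 16/15*θ := by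
    have h1 : θ * (1 - E) * (16/15) ≤ θ * (1 - E) * I :=
      mul_le_mul_of_nonneg_left hI1 (by nlinarith)
    have h2 : θ * E ≤ θ * (3125/θ^5) := mul_le_mul_of_nonneg_left hE hθ0.le
    have e2 : θ * (3125/θ^5) = 3125/θ^4 := by field_simp
    rw [e2] at h2
    have h3 : 3125/θ^4 ≤ 3125/θ^2 := by
      rw [div_le_div_iff₀ (by positivity) (by positivity)]
      have hθ2 : 1 ≤ θ^2 := by nlinarith
      nlinarith [mul_le_mul_of_nonneg_left hθ2 (by positivity : (0:ℝ) ≤ 3125*θ^2)]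
    have hE2 : θ * E ≤ 3125/θ^2 := le_trans h2 h3
    have h5 : 16/15*θ - 16/15*(θ*E) ≤ θ*(1-E)*I := by nlinarith [h1]
    have h6 : 16/15*(θ*E) ≤ 16/15*(3125/θ^2) :=
      mul_le_mul_of_nonneg_left hE2 (by norm_num)
    have h7 : 16/15*(3125/θ^2) ≤ 3334/θ^2 := by
      have e3 : 16/15*(3125/θ^2) = (10000/3)/θ^2 := by ring
      rw [e3]
      gcongr
      norm_num
    linarith
  rw [hcal]
  rw [Real.norm_eq_abs, Real.norm_eq_abs]
  rw [abs_of_pos (by positivity : (0:ℝ) < 1/θ^2)]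
  rw [abs_le]
  constructor
  · have : 3334 * (1/θ^2) = 3334/θ^2 := by ring
    rw [this]
    linarith
  · have : 3334 * (1/θ^2) = 3334/θ^2 := by ring
    rw [this]
    have h384 : (384:ℝ)/θ^2 ≤ 3334/θ^2 := by gcongr <;> norm_num
    linarith
end

section
/- Let f : [0, ∞) × [0, ∞) → ℝ be continuous and polynomially bounded (i.e. there exist C₀ ≥ 0 and an integer N ≥ 0 with |f(s, δ)| ≤ C₀ (1 + s + δ)^N for all s, δ ≥ 0), and suppose there exist a constant C > 0, an integer n ≥ 0 and η > 0 such that |f(s, δ)| ≤ C (s + δ)^n whenever s + δ ≤ η. Then there exist strictly positive constants A, B, D such that for all x ≥ B, all δ ∈ [0, A] and all θ ≥ 0: | ∫₀^∞ t² f(t/x, δ) / ( sinh(t/2) sinh((t+θ)/2) ) dt | ≤ D ∫₀^∞ t² (t/x + δ)^n / ( sinh(t/2) sinh((t+θ)/2) ) dt. -/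
open Real MeasureTheory Set

section Helpers

lemma aux_sinh_lb {u : ℝ} (hu : 1/2 ≤ u) : Real.exp u / 4 ≤ Real.sinh u := by
  have h1 : Real.exp u * Real.exp (-u) = 1 := by rw [← Real.exp_add]; simp
  have h2 : Real.exp (1/2) ≤ Real.exp u := Real.exp_le_exp.2 hu
  have h3 : (2:ℝ) ≤ Real.exp (1/2) * Real.exp (1/2) := by
    rw [← Real.exp_add]; norm_num; linarith [Real.add_one_le_exp (1:ℝ)]
  have h4 := Real.exp_pos u
  have h5 := Real.exp_pos (1/2)
  have h6 := Real.exp_pos (-u)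
  rw [Real.sinh_eq]; nlinarith

lemma aux_pow_exp (k : ℕ) {b : ℝ} (hb : 0 < b) :
    MeasureTheory.IntegrableOn (fun t : ℝ => t ^ k * Real.exp (-b * t)) (Set.Ioi 0) := by
  have h := integrableOn_rpow_mul_exp_neg_mul_rpow (p := 1) (s := (k : ℝ))
    (by exact_mod_cast neg_one_lt_zero.trans_le (Nat.cast_nonneg k)) one_pos hb
  refine h.congr_fun (fun t ht => ?_) measurableSet_Ioi
  beta_reduce
  rw [Real.rpow_natCast, Real.rpow_one]

lemma aux_pow_fac {y : ℝ} (hy : 0 ≤ y) (n : ℕ) : y ^ n ≤ n.factorial * Real.exp y := by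
  have h := Real.sum_le_exp_of_nonneg hy (n+1)
  have h2 : y ^ n / n.factorial ≤ ∑ i ∈ Finset.range (n+1), y ^ i / i.factorial :=
    Finset.single_le_sum (f := fun i => y ^ i / (i.factorial : ℝ)) (fun i _ => by positivity)
      (Finset.self_mem_range_succ n)
  have hf : (0:ℝ) < n.factorial := by exact_mod_cast n.factorial_pos
  rw [div_le_iff₀ hf] at h2
  calc y ^ n ≤ Real.exp y * n.factorial := h2.trans (by gcongr)
    _ = n.factorial * Real.exp y := by ring

lemma aux_Kpos {θ t : ℝ} (hθ : 0 ≤ θ) (ht : 0 < t) :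
    0 < Real.sinh (t/2) * Real.sinh ((t+θ)/2) :=
  mul_pos (Real.sinh_pos_iff.2 (by linarith)) (Real.sinh_pos_iff.2 (by linarith))

lemma aux_Klb0 {θ t : ℝ} (hθ : 0 ≤ θ) (ht : 0 < t) :
    t/2 * (t/2) ≤ Real.sinh (t/2) * Real.sinh ((t+θ)/2) := by
  have h1 : t/2 ≤ Real.sinh (t/2) := Real.self_le_sinh_iff.2 (by linarith)
  have h2 : (t+θ)/2 ≤ Real.sinh ((t+θ)/2) := Real.self_le_sinh_iff.2 (by linarith)
  have h3 : (0:ℝ) ≤ Real.sinh (t/2) := (Real.sinh_pos_iff.2 (by linarith)).le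
  exact mul_le_mul h1 ((by linarith : t/2 ≤ (t+θ)/2).trans h2) (by linarith) h3

lemma aux_Klb1 {θ t : ℝ} (hθ : 0 ≤ θ) (ht : 1 ≤ t) :
    Real.exp ((t + θ)/2) * Real.exp (t/2) / 16 ≤ Real.sinh (t/2) * Real.sinh ((t+θ)/2) := by
  have h1 : Real.exp (t/2) / 4 ≤ Real.sinh (t/2) := aux_sinh_lb (by linarith)
  have h2 : Real.exp ((t+θ)/2) / 4 ≤ Real.sinh ((t+θ)/2) := aux_sinh_lb (by linarith)
  have := (Real.exp_pos (t/2)).le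
  have := (Real.exp_pos ((t+θ)/2)).le
  nlinarith

lemma aux_integrable {θ : ℝ} (hθ : 0 ≤ θ) (u : ℝ → ℝ)
    (hu : ContinuousOn u (Set.Ioi 0)) {c : ℝ} (hc : 0 ≤ c) (M : ℕ)
    (hb : ∀ t > (0:ℝ), |u t| ≤ c * (1+t)^M) :
    MeasureTheory.IntegrableOn
      (fun t => t^2 * u t / (Real.sinh (t/2) * Real.sinh ((t+θ)/2))) (Set.Ioi 0) := by
  set F := fun t => t^2 * u t / (Real.sinh (t/2) * Real.sinh ((t+θ)/2)) with hF
  have hFcont : ContinuousOn F (Set.Ioi 0) :=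
    (((continuous_pow 2).continuousOn.mul hu).div
      (by fun_prop) (fun t ht => (aux_Kpos hθ ht).ne'))
  have habs : ∀ t > (0:ℝ), |F t| = t^2 * |u t| / (Real.sinh (t/2) * Real.sinh ((t+θ)/2)) := by
    intro t ht
    rw [hF, abs_div, abs_mul, abs_pow, abs_of_pos ht, abs_of_pos (aux_Kpos hθ ht)]
  rw [← Set.Ioc_union_Ioi_eq_Ioi (zero_le_one (α := ℝ)), integrableOn_union]
  constructor
  · refine Integrable.mono' (g := fun _ => (4*(c*2^M) : ℝ))
      (integrableOn_const measure_Ioc_lt_top.ne)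
      ((hFcont.mono Set.Ioc_subset_Ioi_self).aestronglyMeasurable measurableSet_Ioc) ?_
    filter_upwards [ae_restrict_mem measurableSet_Ioc] with t ht
    rw [Real.norm_eq_abs, habs t ht.1]
    have hK := aux_Klb0 hθ ht.1
    have hKpos := aux_Kpos hθ ht.1
    have hub : |u t| ≤ c * 2^M := by
      refine (hb t ht.1).trans ?_
      have : (1+t)^M ≤ (2:ℝ)^M := pow_le_pow_left₀ (by linarith [ht.1.le]) (by linarith [ht.2]) M
      nlinarith
    rw [div_le_iff₀ hKpos]
    have h0 := abs_nonneg (u t)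
    nlinarith [ht.1.le, ht.2, sq_nonneg t, mul_le_mul hub hK (by nlinarith) (by positivity)]
  · have hint : MeasureTheory.IntegrableOn
        (fun t : ℝ => 16*(c*2^M) * (t ^ (M+2) * Real.exp (-1 * t))) (Set.Ioi 1) :=
      ((aux_pow_exp (M+2) one_pos).mono_set (Set.Ioi_subset_Ioi zero_le_one)).const_mul _
    refine Integrable.mono' hint
      ((hFcont.mono (Set.Ioi_subset_Ioi zero_le_one)).aestronglyMeasurable measurableSet_Ioi) ?_
    filter_upwards [ae_restrict_mem measurableSet_Ioi] with t ht
    have ht1 : (1:ℝ) < t := ht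
    have ht0 : (0:ℝ) < t := by linarith
    rw [Real.norm_eq_abs, habs t ht0]
    have hKpos := aux_Kpos hθ ht0
    have hK := aux_Klb1 hθ ht1.le
    have hub : |u t| ≤ c * 2^M * t^M := by
      refine (hb t ht0).trans ?_
      have h2t : (1+t)^M ≤ (2*t)^M := pow_le_pow_left₀ (by linarith) (by linarith) M
      rw [mul_pow] at h2t
      nlinarith [pow_nonneg ht0.le M]
    rw [div_le_iff₀ hKpos]
    have hexp1 : Real.exp (-1*t) * Real.exp t = 1 := by rw [← Real.exp_add]; norm_num
    have hKe : Real.exp t / 16 ≤ Real.sinh (t/2) * Real.sinh ((t+θ)/2) := by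
      have hm : Real.exp (t/2) ≤ Real.exp ((t+θ)/2) := Real.exp_le_exp.2 (by linarith)
      have he : Real.exp (t/2) * Real.exp (t/2) = Real.exp t := by rw [← Real.exp_add]; ring_nf
      nlinarith [Real.exp_pos (t/2), Real.exp_pos ((t+θ)/2)]
    calc t^2 * |u t| ≤ c*2^M * t^(M+2) := by
          rw [pow_add]
          nlinarith [mul_nonneg (sq_nonneg t) (sub_nonneg.2 hub)]
      _ ≤ 16*(c*2^M) * (t^(M+2) * Real.exp (-1*t)) * (Real.sinh (t/2) * Real.sinh ((t+θ)/2)) := by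
          have h16 : (0:ℝ) ≤ 16*(c*2^M) * (t^(M+2) * Real.exp (-1*t)) := by positivity
          have h2 := mul_le_mul_of_nonneg_left hKe h16
          have h3 : c*2^M*t^(M+2) * (Real.exp (-1*t)*Real.exp t) = c*2^M*t^(M+2) := by
            rw [hexp1, mul_one]
          nlinarith [h2, h3]

end Helpers

set_option maxHeartbeats 1000000

/-- uniform comparison estimate for integrals against the thermal kernel. -/
theorem stmt_15 (f : ℝ → ℝ → ℝ)
    (hcont : ContinuousOn (fun p : ℝ × ℝ => f p.1 p.2) (Set.Ici 0 ×ˢ Set.Ici 0))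
    (C₀ : ℝ) (hC₀ : 0 ≤ C₀) (N : ℕ)
    (hpb : ∀ s ≥ (0:ℝ), ∀ δ ≥ (0:ℝ), |f s δ| ≤ C₀ * (1 + s + δ) ^ N)
    (C : ℝ) (hC : 0 < C) (n : ℕ) (η : ℝ) (hη : 0 < η)
    (hsmall : ∀ s ≥ (0:ℝ), ∀ δ ≥ (0:ℝ), s + δ ≤ η → |f s δ| ≤ C * (s + δ) ^ n) :
    ∃ A > (0:ℝ), ∃ B > (0:ℝ), ∃ D > (0:ℝ),
      ∀ x ≥ B, ∀ δ ∈ Set.Icc (0:ℝ) A, ∀ θ ≥ (0:ℝ),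
        |∫ t in Set.Ioi (0:ℝ),
            t ^ 2 * f (t / x) δ / (Real.sinh (t / 2) * Real.sinh ((t + θ) / 2))| ≤
          D * ∫ t in Set.Ioi (0:ℝ),
            t ^ 2 * (t / x + δ) ^ n / (Real.sinh (t / 2) * Real.sinh ((t + θ) / 2)) := by
  have hM₂int : MeasureTheory.IntegrableOn
      (fun t : ℝ => t^(N+2) * Real.exp (-(1/2) * t)) (Set.Ioi 0) :=
    aux_pow_exp _ (by norm_num)
  set M₂ : ℝ := ∫ t in Set.Ioi (0:ℝ), t^(N+2) * Real.exp (-(1/2) * t) with hM₂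
  have hM₂0 : 0 ≤ M₂ := setIntegral_nonneg measurableSet_Ioi (fun t ht =>
    mul_nonneg (pow_nonneg (le_of_lt ht) _) (Real.exp_pos _).le)
  set Dtail : ℝ := 16*(C₀*4^N) * ((n.factorial : ℝ) * (4/η)^n) * M₂ * (Real.exp 2/4) with hDtail
  have hDtail0 : 0 ≤ Dtail := by
    rw [hDtail]
    have h4 : (0:ℝ) ≤ (4/η)^n := by positivity
    positivity
  refine ⟨min (η/2) 1, lt_min (by linarith) one_pos, max (2/η) 1,
    lt_of_lt_of_le one_pos (le_max_right _ _), C + Dtail, by linarith, ?_⟩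
  intro x hx δ hδ θ hθ
  have hx1 : (1:ℝ) ≤ x := le_trans (le_max_right _ _) hx
  have hx0 : (0:ℝ) < x := lt_of_lt_of_le one_pos hx1
  have hxη : 2/η ≤ x := le_trans (le_max_left _ _) hx
  have hδ0 : 0 ≤ δ := hδ.1
  have hδ1 : δ ≤ 1 := le_trans hδ.2 (min_le_right _ _)
  have hδη : δ ≤ η/2 := le_trans hδ.2 (min_le_left _ _)
  set K : ℝ → ℝ := fun t => Real.sinh (t/2) * Real.sinh ((t+θ)/2) with hK
  set g : ℝ → ℝ := fun t => t^2 * f (t/x) δ / K t with hg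
  set h : ℝ → ℝ := fun t => t^2 * (t/x + δ)^n / K t with hh
  -- integrability of g
  have hgcont : ContinuousOn (fun t : ℝ => f (t/x) δ) (Set.Ioi 0) := by
    have : ContinuousOn (fun t : ℝ => (t/x, δ)) (Set.Ioi 0) :=
      ((continuousOn_id.div_const x).prodMk continuousOn_const)
    exact hcont.comp this (fun t ht =>
      ⟨div_nonneg (le_of_lt ht) hx0.le, hδ0⟩)
  have hg_int : MeasureTheory.IntegrableOn g (Set.Ioi 0) := by
    refine aux_integrable hθ _ hgcont (c := C₀*2^N) (mul_nonneg hC₀ (by positivity)) N (fun t ht => ?_)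
    have h1 := hpb (t/x) (div_nonneg ht.le hx0.le) δ hδ0
    refine h1.trans ?_
    have htx : t/x ≤ t := by
      rw [div_le_iff₀ hx0]; nlinarith
    have h2 : (1 + t/x + δ)^N ≤ (2*(1+t))^N :=
      pow_le_pow_left₀ (by positivity) (by linarith) N
    rw [mul_pow] at h2
    nlinarith [pow_nonneg (show (0:ℝ) ≤ 1+t by linarith) N]
  have hh_int : MeasureTheory.IntegrableOn h (Set.Ioi 0) := by
    refine aux_integrable hθ _ (by fun_prop) (c := (1:ℝ)) one_pos.le n (fun t ht => ?_)
    have htx : t/x ≤ t := by rw [div_le_iff₀ hx0]; nlinarith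
    rw [abs_of_nonneg (by positivity), one_mul]
    exact pow_le_pow_left₀ (by positivity) (by linarith) n
  have hKpos : ∀ t : ℝ, 0 < t → 0 < K t := fun t ht => aux_Kpos hθ ht
  have hh_nn : ∀ t ∈ Set.Ioi (0:ℝ), 0 ≤ h t := fun t ht =>
    div_nonneg (mul_nonneg (sq_nonneg t)
      (pow_nonneg (add_nonneg (div_nonneg (le_of_lt ht) hx0.le) hδ0) n)) (hKpos t ht).le
  set Ih : ℝ := ∫ t in Set.Ioi (0:ℝ), h t with hIh
  have hIh0 : 0 ≤ Ih := setIntegral_nonneg measurableSet_Ioi hh_nn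
  have hh_nn_ae : (0:ℝ → ℝ) ≤ᵐ[MeasureTheory.volume.restrict (Set.Ioi (0:ℝ))] h := by
    filter_upwards [ae_restrict_mem measurableSet_Ioi] with t ht using hh_nn t ht
  -- lower bound for Ih
  have hlow : Real.exp (-(θ/2)) * (1/x)^n ≤ Real.exp 2/4 * Ih := by
    have hKub : ∀ t ∈ Set.Icc (1:ℝ) 2, K t ≤ Real.exp 2 * Real.exp (θ/2) / 4 := by
      intro t ht
      have h1 : Real.sinh (t/2) ≤ Real.exp (t/2) / 2 := by
        have := Real.exp_pos (-(t/2)); rw [Real.sinh_eq]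
        rw [Real.exp_neg] at this ⊢; linarith
      have h2 : Real.sinh ((t+θ)/2) ≤ Real.exp ((t+θ)/2) / 2 := by
        have := Real.exp_pos (-((t+θ)/2)); rw [Real.sinh_eq]
        rw [Real.exp_neg] at this ⊢; linarith
      have h3 : Real.exp (t/2) ≤ Real.exp 1 := Real.exp_le_exp.2 (by linarith [ht.2])
      have h4 : Real.exp ((t+θ)/2) ≤ Real.exp 1 * Real.exp (θ/2) := by
        rw [← Real.exp_add]; exact Real.exp_le_exp.2 (by linarith [ht.2])
      have h5 : Real.exp 1 * Real.exp 1 = Real.exp 2 := by rw [← Real.exp_add]; norm_num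
      have hs2 : 0 < Real.sinh ((t+θ)/2) := Real.sinh_pos_iff.2 (by linarith [ht.1])
      calc K t ≤ (Real.exp (t/2)/2) * (Real.exp ((t+θ)/2)/2) := by
            exact mul_le_mul h1 h2 hs2.le (by positivity)
        _ ≤ (Real.exp 1/2) * ((Real.exp 1 * Real.exp (θ/2))/2) := by
            have := (Real.exp_pos ((t+θ)/2)).le
            exact mul_le_mul (by linarith) (by linarith) (by positivity) (by positivity)
        _ = Real.exp 2 * Real.exp (θ/2) / 4 := by rw [← h5]; ring
    have hclow : ∀ t ∈ Set.Icc (1:ℝ) 2,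
        (1/x)^n / (Real.exp 2 * Real.exp (θ/2) / 4) ≤ h t := by
      intro t ht
      have ht0 : (0:ℝ) < t := lt_of_lt_of_le one_pos ht.1
      have hnum : (1/x)^n ≤ t^2 * (t/x + δ)^n := by
        have h1 : (1:ℝ)/x ≤ t/x + δ := by
          have h2 : (1:ℝ)/x ≤ t/x := by gcongr; exact ht.1
          linarith
        have h3 : (1/x)^n ≤ (t/x + δ)^n := pow_le_pow_left₀ (by positivity) h1 n
        have h4 : (0:ℝ) ≤ t/x + δ := by positivity
        nlinarith [mul_le_mul_of_nonneg_right (show (1:ℝ) ≤ t^2 by nlinarith [ht.1])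
          (pow_nonneg h4 n), h3, pow_nonneg h4 n]
      refine div_le_div₀ (mul_nonneg (sq_nonneg t) (pow_nonneg ?_ n)) hnum (hKpos t ht0) (hKub t ht)
      have := ht.1
      positivity
    have hstep := setIntegral_ge_of_const_le measurableSet_Icc
      (by exact (measure_Icc_lt_top).ne) hclow
      (hh_int.mono_set (fun t ht => lt_of_lt_of_le one_pos ht.1))
    have hvol : (MeasureTheory.volume (Set.Icc (1:ℝ) 2)).toReal = 1 := by
      rw [Real.volume_Icc]; norm_num
    rw [measureReal_def, hvol, one_smul] at hstep
    have hsub : (∫ t in Set.Icc (1:ℝ) 2, h t) ≤ Ih :=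
      setIntegral_mono_set hh_int hh_nn_ae
        (HasSubset.Subset.eventuallyLE (fun t ht => lt_of_lt_of_le one_pos ht.1))
    have hc2 : (1/x)^n / (Real.exp 2 * Real.exp (θ/2) / 4) ≤ Ih := hstep.trans hsub
    rw [div_le_iff₀ (by positivity)] at hc2
    have hm2 := mul_le_mul_of_nonneg_left hc2 (Real.exp_pos (-(θ/2))).le
    have hE : Real.exp (-(θ/2)) * Real.exp (θ/2) = 1 := by rw [← Real.exp_add]; norm_num
    have heq : Real.exp (-(θ/2)) * (Ih * (Real.exp 2 * Real.exp (θ/2) / 4))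
        = Real.exp 2/4 * Ih := by
      linear_combination (Ih * Real.exp 2/4) * hE
    linarith [hm2, heq.le, heq.ge]
  -- absolute value of g
  have habsg : ∀ t : ℝ, 0 < t → |g t| = t^2 * |f (t/x) δ| / K t := by
    intro t ht
    rw [hg, abs_div, abs_mul, abs_pow, abs_of_pos ht, abs_of_pos (hKpos t ht)]
  -- splitting point
  set m : ℝ := η*x/2 with hm
  have hm0 : (0:ℝ) < m := by rw [hm]; positivity
  have hm1 : (1:ℝ) ≤ m := by
    have := (div_le_iff₀ hη).1 hxη
    rw [hm]; nlinarith
  have hgabs1 : MeasureTheory.IntegrableOn (fun t => |g t|) (Set.Ioc 0 m) :=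
    MeasureTheory.IntegrableOn.mono_set hg_int.abs Set.Ioc_subset_Ioi_self
  have hgabs2 : MeasureTheory.IntegrableOn (fun t => |g t|) (Set.Ioi m) :=
    MeasureTheory.IntegrableOn.mono_set hg_int.abs (Set.Ioi_subset_Ioi hm0.le)
  have hsplit : (∫ t in Set.Ioi (0:ℝ), |g t|)
      = (∫ t in Set.Ioc 0 m, |g t|) + ∫ t in Set.Ioi m, |g t| := by
    rw [← setIntegral_union (Set.Ioc_disjoint_Ioi le_rfl) measurableSet_Ioi hgabs1 hgabs2,
      Set.Ioc_union_Ioi_eq_Ioi hm0.le]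
  -- Part A
  have hpartA : (∫ t in Set.Ioc (0:ℝ) m, |g t|) ≤ C * Ih := by
    have hpt : ∀ t ∈ Set.Ioc (0:ℝ) m, |g t| ≤ C * h t := by
      intro t ht
      have ht0 : 0 < t := ht.1
      have hsum : t/x + δ ≤ η := by
        have h1 : t/x ≤ η/2 := by rw [div_le_iff₀ hx0]; rw [hm] at ht; nlinarith [ht.2]
        linarith
      have hf := hsmall (t/x) (div_nonneg ht0.le hx0.le) δ hδ0 hsum
      rw [habsg t ht0]
      calc t^2 * |f (t/x) δ| / K t ≤ t^2 * (C * (t/x+δ)^n) / K t := by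
            rw [div_le_div_iff_of_pos_right (hKpos t ht0)]
            nlinarith [mul_le_mul_of_nonneg_left hf (sq_nonneg t)]
        _ = C * h t := by rw [hh]; ring
    calc (∫ t in Set.Ioc (0:ℝ) m, |g t|) ≤ ∫ t in Set.Ioc (0:ℝ) m, C * h t :=
          setIntegral_mono_on hgabs1
            ((hh_int.mono_set Set.Ioc_subset_Ioi_self).const_mul C) measurableSet_Ioc hpt
      _ = C * ∫ t in Set.Ioc (0:ℝ) m, h t := by rw [MeasureTheory.integral_const_mul]
      _ ≤ C * Ih := by
          refine mul_le_mul_of_nonneg_left ?_ hC.le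
          exact setIntegral_mono_set hh_int hh_nn_ae
            (HasSubset.Subset.eventuallyLE Set.Ioc_subset_Ioi_self)
  -- Part B
  have hpartB : (∫ t in Set.Ioi m, |g t|) ≤ Dtail * Ih := by
    set cst : ℝ := 16*(C₀*4^N) * Real.exp (-(θ/2)) * Real.exp (-(m/2)) with hcst
    have hcst0 : 0 ≤ cst := by
      rw [hcst]
      have := (Real.exp_pos (-(θ/2))).le
      have := (Real.exp_pos (-(m/2))).le
      positivity
    have hptB : ∀ t ∈ Set.Ioi m, |g t| ≤ cst * (t^(N+2) * Real.exp (-(1/2)*t)) := by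
      intro t htm
      have ht1 : (1:ℝ) ≤ t := le_trans hm1 (le_of_lt htm)
      have ht0 : (0:ℝ) < t := lt_of_lt_of_le one_pos ht1
      rw [habsg t ht0]
      have hfb : |f (t/x) δ| ≤ C₀ * 4^N * t^N := by
        refine (hpb (t/x) (div_nonneg ht0.le hx0.le) δ hδ0).trans ?_
        have htx : t/x ≤ t := by rw [div_le_iff₀ hx0]; nlinarith
        have h4 : (1 + t/x + δ)^N ≤ (4*t)^N :=
          pow_le_pow_left₀ (by positivity) (by linarith) N
        rw [mul_pow] at h4
        nlinarith [mul_le_mul_of_nonneg_left h4 hC₀]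
      have hKlb : Real.exp ((t+θ)/2) * Real.exp (t/2) / 16 ≤ K t := aux_Klb1 hθ ht1
      rw [div_le_iff₀ (hKpos t ht0)]
      have hRnn : (0:ℝ) ≤ cst * (t^(N+2) * Real.exp (-(1/2)*t)) :=
        mul_nonneg hcst0 (mul_nonneg (pow_nonneg ht0.le _) (Real.exp_pos _).le)
      have hEeq : Real.exp (-(θ/2)) * Real.exp (-(m/2)) * Real.exp (-(1/2)*t)
          * (Real.exp ((t+θ)/2) * Real.exp (t/2)) = Real.exp ((t-m)/2) := by
        rw [← Real.exp_add, ← Real.exp_add, ← Real.exp_add, ← Real.exp_add]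
        congr 1; ring
      have h1exp : (1:ℝ) ≤ Real.exp ((t-m)/2) := Real.one_le_exp (by linarith [le_of_lt (show m < t from htm)])
      have hstep2 : t^2 * |f (t/x) δ|
          ≤ cst * (t^(N+2) * Real.exp (-(1/2)*t)) * (Real.exp ((t+θ)/2) * Real.exp (t/2) / 16) := by
        have heq2 : cst * (t^(N+2) * Real.exp (-(1/2)*t))
            * (Real.exp ((t+θ)/2) * Real.exp (t/2) / 16)
            = C₀ * 4^N * t^(N+2) * Real.exp ((t-m)/2) := by
          rw [hcst]; linear_combination (C₀ * 4^N * t^(N+2)) * hEeq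
        rw [heq2]
        have hb1 : t^2 * |f (t/x) δ| ≤ C₀ * 4^N * t^(N+2) := by
          rw [pow_add]
          nlinarith [mul_nonneg (sq_nonneg t) (sub_nonneg.2 hfb)]
        have hb2 : C₀ * 4^N * t^(N+2) ≤ C₀ * 4^N * t^(N+2) * Real.exp ((t-m)/2) := by
          nlinarith [mul_le_mul_of_nonneg_left h1exp
            (show (0:ℝ) ≤ C₀ * 4^N * t^(N+2) from
              mul_nonneg (mul_nonneg hC₀ (by positivity)) (pow_nonneg ht0.le _))]
        linarith
      have hstep3 := mul_le_mul_of_nonneg_left hKlb hRnn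
      linarith
    have hM₂m : (∫ t in Set.Ioi m, t^(N+2) * Real.exp (-(1/2)*t)) ≤ M₂ := by
      refine setIntegral_mono_set hM₂int ?_
        (HasSubset.Subset.eventuallyLE (Set.Ioi_subset_Ioi hm0.le))
      filter_upwards [ae_restrict_mem measurableSet_Ioi] with t ht
      exact mul_nonneg (pow_nonneg (le_of_lt ht) _) (Real.exp_pos _).le
    have hexpm : Real.exp (-(m/2)) ≤ (n.factorial : ℝ) * (4/η)^n * (1/x)^n := by
      have hy : (0:ℝ) ≤ η*x/4 := by positivity
      have h1 := aux_pow_fac hy n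
      have hm2 : m/2 = η*x/4 := by rw [hm]; ring
      have hEpos := Real.exp_pos (η*x/4)
      have hprod : ((4:ℝ)/η)^n * ((1/x)^n * (η*x/4)^n) = 1 := by
        rw [← mul_pow, ← mul_pow]
        have hxne := hx0.ne'
        have hηne := hη.ne'
        have : (4/η) * ((1/x) * (η*x/4)) = 1 := by field_simp
        rw [this, one_pow]
      have hP : (0:ℝ) < (η*x/4)^n := by positivity
      have hkey : (1:ℝ) ≤ ((n.factorial:ℝ)*(4/η)^n*(1/x)^n) * Real.exp (η*x/4) := by
        have h2 : (η*x/4)^n * 1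
            ≤ (η*x/4)^n * (((n.factorial:ℝ)*(4/η)^n*(1/x)^n) * Real.exp (η*x/4)) := by
          rw [mul_one]
          calc (η*x/4)^n ≤ (n.factorial:ℝ) * Real.exp (η*x/4) := h1
            _ = (n.factorial:ℝ) * Real.exp (η*x/4) * ((4/η)^n * ((1/x)^n * (η*x/4)^n)) := by
                rw [hprod, mul_one]
            _ = (η*x/4)^n * (((n.factorial:ℝ)*(4/η)^n*(1/x)^n) * Real.exp (η*x/4)) := by ring
        exact le_of_mul_le_mul_left h2 hP
      rw [hm2, Real.exp_neg]
      rw [inv_le_iff_one_le_mul₀ hEpos]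
      exact hkey
    calc (∫ t in Set.Ioi m, |g t|)
        ≤ ∫ t in Set.Ioi m, cst * (t^(N+2) * Real.exp (-(1/2)*t)) :=
          setIntegral_mono_on hgabs2
            ((hM₂int.mono_set (Set.Ioi_subset_Ioi hm0.le)).const_mul cst) measurableSet_Ioi hptB
      _ = cst * ∫ t in Set.Ioi m, t^(N+2) * Real.exp (-(1/2)*t) := by
          rw [MeasureTheory.integral_const_mul]
      _ ≤ cst * M₂ := mul_le_mul_of_nonneg_left hM₂m hcst0
      _ = (16*(C₀*4^N) * Real.exp (-(θ/2)) * M₂) * Real.exp (-(m/2)) := by rw [hcst]; ring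
      _ ≤ (16*(C₀*4^N) * Real.exp (-(θ/2)) * M₂) * ((n.factorial:ℝ)*(4/η)^n*(1/x)^n) :=
          mul_le_mul_of_nonneg_left hexpm
            (mul_nonneg (mul_nonneg (mul_nonneg (by norm_num) (mul_nonneg hC₀ (by positivity)))
              (Real.exp_pos _).le) hM₂0)
      _ = (16*(C₀*4^N)*((n.factorial:ℝ)*(4/η)^n)*M₂) * (Real.exp (-(θ/2)) * (1/x)^n) := by ring
      _ ≤ (16*(C₀*4^N)*((n.factorial:ℝ)*(4/η)^n)*M₂) * (Real.exp 2/4 * Ih) :=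
          mul_le_mul_of_nonneg_left hlow
            (mul_nonneg (mul_nonneg (mul_nonneg (by norm_num) (mul_nonneg hC₀ (by positivity)))
              (by positivity)) hM₂0)
      _ = Dtail * Ih := by rw [hDtail]; ring
  -- assemble
  calc |∫ t in Set.Ioi (0:ℝ), g t| ≤ ∫ t in Set.Ioi (0:ℝ), |g t| := by
        simpa [Real.norm_eq_abs] using
          MeasureTheory.norm_integral_le_integral_norm (μ := MeasureTheory.volume.restrict (Set.Ioi (0:ℝ))) g
    _ = (∫ t in Set.Ioc (0:ℝ) m, |g t|) + ∫ t in Set.Ioi m, |g t| := hsplit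
    _ ≤ C * Ih + Dtail * Ih := add_le_add hpartA hpartB
    _ = (C + Dtail) * Ih := by ring
end

section
/- Let ν > 0 and let v̂ : ℝ → ℝ be continuous and even with v̂(0) > 0; assume v̂ is C⁵ on a neighborhood of 0 with v̂′(0) = 0 and 1 + 2ν v̂″(0)/v̂(0) > 0; and assume k²/4 + ν v̂(k)/v̂(0) > 0 for every k > 0. Extend ω_bg radially to ℝ³ by ω_bg(𝐩) := ω_bg(|𝐩|). Then there exist K > 0 and δ > 0 such that for every 𝐤 ∈ ℝ³ with 0 < |𝐤| ≤ δ and every p ∈ [0, K] there exists 𝐩 ∈ ℝ³ with |𝐩| = p and ω_bg(𝐩) − ω_bg(𝐩 − 𝐤) = −ω_bg(𝐤). -/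
private lemma stmt16_cross (p k sp sk Fp Fk : ℝ) (hsp2 : sp^2 = Fp) (hsk2 : sk^2 = Fk) :
    2*(p*k)*(sp*sk) ≤ k^2*Fp + p^2*Fk := by
  nlinarith [sq_nonneg (k*sp - p*sk)]

private lemma stmt16_key (a ν p k Ep Ek Epk : ℝ) (ha : 0 < a) (hp : 0 < p) (hk : 0 < k)
    (h1 : -(a*(p+k)*k) ≤ Epk - Ep) (h2 : -(a*(p+k)*p) ≤ Epk - Ek) :
    (p*k + k^2)*(ν*p^2 + a*p^4 + p^2*Ep) + (p*k + p^2)*(ν*k^2 + a*k^4 + k^2*Ek) ≤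
      p*k*(ν*(p+k)^2 + a*(p+k)^4 + (p+k)^2*Epk) := by
  have m1 : 0 ≤ p*p*k*(p+k) := by positivity
  have m2 : 0 ≤ p*k*k*(p+k) := by positivity
  nlinarith [mul_le_mul_of_nonneg_left h1 m1, mul_le_mul_of_nonneg_left h2 m2,
    mul_nonneg ha.le (sq_nonneg (p*k*(p+k)))]

private lemma stmt16_final (p k sp sk Fp Fk Fpk : ℝ) (hp : 0 < p) (hk : 0 < k)
    (hsp2 : sp^2 = Fp) (hsk2 : sk^2 = Fk)
    (cross : 2*(p*k)*(sp*sk) ≤ k^2*Fp + p^2*Fk)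
    (key : (p*k + k^2)*Fp + (p*k + p^2)*Fk ≤ p*k*Fpk) :
    (sp + sk)^2 ≤ Fpk := by
  have hpk : 0 < p*k := mul_pos hp hk
  have hfin : p*k*((sp + sk)^2) ≤ p*k*Fpk := by nlinarith []
  exact le_of_mul_le_mul_left hfin hpk


private lemma stmt16_s2 (p k r : ℝ) (h1 : |p - k| ≤ r) (h2 : r ≤ p + k) :
    ((p^2 + k^2 - r^2)/2)^2 ≤ p^2*k^2 := by
  have hr0 : 0 ≤ r := (abs_nonneg _).trans h1
  have a1 : (p - k)^2 ≤ r^2 := by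
    have h3 := sq_abs (p - k)
    nlinarith [abs_nonneg (p - k)]
  have a2 : r^2 ≤ (p + k)^2 := by nlinarith
  nlinarith [a1, a2]

set_option maxHeartbeats 2000000 in
/-- solvability of the Landau resonance condition
`ω_bg(𝐩) − ω_bg(𝐩 − 𝐤) = −ω_bg(𝐤)` for all small `𝐤` and all `p = |𝐩| ∈ [0, K]`. -/
theorem stmt_16 (ν : ℝ) (hν : 0 < ν) (vhat : ℝ → ℝ)
    (hcont : Continuous vhat) (heven : ∀ k, vhat (-k) = vhat k)
    (hv0 : 0 < vhat 0)
    (hsmooth : ContDiffAt ℝ 5 vhat 0)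
    (hd1 : deriv vhat 0 = 0)
    (hd2 : 0 < 1 + 2 * ν * deriv (deriv vhat) 0 / vhat 0)
    (hpos : ∀ k > (0:ℝ), 0 < k ^ 2 / 4 + ν * vhat k / vhat 0) :
    ∃ K > (0:ℝ), ∃ δ > (0:ℝ),
      ∀ kvec : EuclideanSpace ℝ (Fin 3), 0 < ‖kvec‖ → ‖kvec‖ ≤ δ →
        ∀ p ∈ Set.Icc (0:ℝ) K,
          ∃ pvec : EuclideanSpace ℝ (Fin 3), ‖pvec‖ = p ∧
            omegaBg ν vhat ‖pvec‖ - omegaBg ν vhat ‖pvec - kvec‖ =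
              -omegaBg ν vhat ‖kvec‖ := by
  have hv0' : vhat 0 ≠ 0 := ne_of_gt hv0
  set c : ℝ := ν / vhat 0 with hc_def
  have hc : 0 < c := div_pos hν hv0
  have hcv : c * vhat 0 = ν := div_mul_cancel₀ ν hv0'
  set b : ℝ := deriv (deriv vhat) 0 with hb_def
  set a : ℝ := 1/4 + c*b/2 with ha_def
  have ha : 0 < a := by
    have h1 : 2*ν*b/vhat 0 = 2*(c*b) := by rw [hc_def]; ring
    rw [h1] at hd2
    rw [ha_def]; linarith
  -- smooth neighborhood
  obtain ⟨u, hu_mem, hu_cd⟩ := hsmooth.contDiffOn (le_refl _) (by simp)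
  rcases Metric.mem_nhds_iff.mp hu_mem with ⟨η, hη, hball⟩
  have hcd : ContDiffOn ℝ 5 vhat (Metric.ball 0 η) := hu_cd.mono hball
  have hmemball : ∀ r : ℝ, |r| < η → r ∈ Metric.ball (0:ℝ) η := by
    intro r hr; simp [Metric.mem_ball, Real.dist_eq, hr]
  have hDr : ∀ r : ℝ, |r| < η → HasDerivAt vhat (deriv vhat r) r := by
    intro r hr
    exact ((hcd.differentiableOn (by norm_num)).differentiableAt
      (Metric.isOpen_ball.mem_nhds (hmemball r hr))).hasDerivAt
  have hcd' : ContDiffOn ℝ 4 (deriv vhat) (Metric.ball 0 η) :=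
    hcd.deriv_of_isOpen Metric.isOpen_ball (by norm_num)
  have hdd : HasDerivAt (deriv vhat) b 0 := by
    have := ((hcd'.differentiableOn (by norm_num)).differentiableAt
      (Metric.isOpen_ball.mem_nhds (hmemball 0 (by simpa using hη)))).hasDerivAt
    simpa [hb_def] using this
  -- little-o bound on deriv vhat r - r*b
  have hlo : (fun r => deriv vhat r - r * b) =o[nhds 0] fun r => r := by
    have h0 := hasDerivAt_iff_isLittleO.mp hdd
    simpa [hd1, sub_zero, smul_eq_mul, mul_comm] using h0
  have hbd := hlo.def (show (0:ℝ) < a/c from div_pos ha hc)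
  rcases Metric.eventually_nhds_iff.mp hbd with ⟨δ1, hδ1pos, hδ1⟩
  -- continuity lower bound on vhat
  have hev : ∀ᶠ r in nhds (0:ℝ), vhat r ∈ Set.Ioi (vhat 0/2) :=
    hcont.continuousAt.preimage_mem_nhds (Ioi_mem_nhds (by linarith))
  rcases Metric.eventually_nhds_iff.mp hev with ⟨δ2, hδ2pos, hδ2⟩
  -- smallness for monotonicity
  set δ3 : ℝ := Real.sqrt (ν / (8*(c * |b| + a + 1))) with hδ3_def
  have hδ3pos : 0 < δ3 := Real.sqrt_pos.mpr (by positivity)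
  have hδ3sq : δ3^2 = ν / (8*(c * |b| + a + 1)) := Real.sq_sqrt (by positivity)
  have hδ3bound : (c * |b| + a) * (2*δ3)^2 ≤ ν/2 := by
    have h1 : 0 ≤ c * |b| := by positivity
    have h2 : (2*δ3)^2 = 4 * (ν / (8*(c * |b| + a + 1))) := by rw [mul_pow]; rw [hδ3sq]; ring
    have hXne : c * |b| + a + 1 ≠ 0 := by positivity
    rw [h2]
    calc (c * |b| + a)*(4*(ν / (8*(c * |b| + a + 1)))) = (ν/2) * ((c * |b| + a)/(c * |b| + a + 1)) := by
          field_simp; ring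
      _ ≤ (ν/2) * 1 := by
          apply mul_le_mul_of_nonneg_left _ (by positivity)
          rw [div_le_one (by positivity)]; linarith
      _ = ν/2 := mul_one _
  set δ : ℝ := min (min (η/4) δ3) (min (δ1/4) (δ2/4)) with hδ_def
  have hδpos : 0 < δ := by
    apply lt_min (lt_min (by linarith) hδ3pos) (lt_min (by linarith) (by linarith))
  have hδη : 2*δ < η := by
    have := min_le_left (min (η/4) δ3) (min (δ1/4) (δ2/4))
    have := min_le_left (η/4) δ3
    simp only [hδ_def] at *; linarith [le_trans (min_le_left (min (η/4) δ3) (min (δ1/4) (δ2/4))) (min_le_left (η/4) δ3)]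
  have hδδ3 : δ ≤ δ3 := le_trans (min_le_left _ _) (min_le_right _ _)
  have hδδ1 : 2*δ < δ1 := by
    have h := le_trans (min_le_right (min (η/4) δ3) (min (δ1/4) (δ2/4))) (min_le_left (δ1/4) (δ2/4))
    simp only [hδ_def] at *; linarith
  have hδδ2 : 2*δ < δ2 := by
    have h := le_trans (min_le_right (min (η/4) δ3) (min (δ1/4) (δ2/4))) (min_le_right (δ1/4) (δ2/4))
    simp only [hδ_def] at *; linarith
  -- collected estimates on [-2δ, 2δ]
  have hvd' : ∀ r : ℝ, |r| ≤ 2*δ → |deriv vhat r - r*b| ≤ (a/c)*|r| := by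
    intro r hr
    have := hδ1 (y := r) (by rw [Real.dist_eq, sub_zero]; linarith)
    simpa [Real.norm_eq_abs] using this
  have hvlb : ∀ r : ℝ, |r| ≤ 2*δ → vhat 0/2 ≤ vhat r := by
    intro r hr
    have := hδ2 (y := r) (by rw [Real.dist_eq, sub_zero]; linarith)
    exact le_of_lt this
  have hDr' : ∀ r : ℝ, |r| ≤ 2*δ → HasDerivAt vhat (deriv vhat r) r := by
    intro r hr; exact hDr r (by linarith)
  -- the functions F and E
  set F : ℝ → ℝ := fun r => r^4/4 + c*(vhat r * r^2) with hF_def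
  set E : ℝ → ℝ := fun r => c*(vhat r - vhat 0 - b*r^2/2) with hE_def
  have homega : ∀ r : ℝ, omegaBg ν vhat r = Real.sqrt (F r) := by
    intro r; unfold omegaBg; congr 1; rw [hF_def]; simp only; rw [hc_def]; ring
  have hFE : ∀ r : ℝ, F r = ν*r^2 + a*r^4 + r^2 * E r := by
    intro r; rw [hF_def, hE_def]; simp only; rw [ha_def]
    linear_combination (r^2) * hcv
  have hFpos : ∀ r : ℝ, 0 < r → 0 < F r := by
    intro r hr
    have h := hpos r hr
    have heq : F r = r^2 * (r^2/4 + ν*vhat r/vhat 0) := by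
      rw [hF_def]; simp only; rw [hc_def]; ring
    rw [heq]; exact mul_pos (by positivity) h
  have hF0 : F 0 = 0 := by rw [hF_def]; norm_num
  have hFnn : ∀ r : ℝ, 0 ≤ r → 0 ≤ F r := by
    intro r hr
    rcases hr.eq_or_lt with h | h
    · rw [← h, hF0]
    · exact (hFpos r h).le
  have hFcont : Continuous F := by
    rw [hF_def]; exact ((continuous_pow 4).div_const 4).add
      (continuous_const.mul (hcont.mul (continuous_pow 2)))
  -- derivative of E
  have hEderiv : ∀ r : ℝ, |r| ≤ 2*δ → HasDerivAt E (c*(deriv vhat r - b*r)) r := by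
    intro r hr
    have h1 := hDr' r hr
    have h2 : HasDerivAt (fun x : ℝ => b*x^2/2) (b*r) r := by
      have := ((hasDerivAt_pow 2 r).const_mul b).div_const 2
      exact this.congr_deriv (by push_cast; ring)
    have h3 : HasDerivAt (fun x : ℝ => vhat x - vhat 0 - b*x^2/2) (deriv vhat r - b*r) r :=
      (h1.sub_const (vhat 0)).sub h2
    rw [hE_def]
    exact h3.const_mul c
  -- MVT estimate for E
  have hEdiff : ∀ x y : ℝ, 0 ≤ x → x ≤ y → y ≤ 2*δ → |E y - E x| ≤ (a*y)*(y-x) := by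
    intro x y hx hxy hy
    have hconv : Convex ℝ (Set.Icc x y) := convex_Icc x y
    have hder : ∀ r ∈ Set.Icc x y, HasDerivWithinAt E (c*(deriv vhat r - b*r)) (Set.Icc x y) r := by
      intro r hr
      exact (hEderiv r (by rw [abs_of_nonneg (le_trans hx hr.1)]; linarith [hr.2])).hasDerivWithinAt
    have hbound : ∀ r ∈ Set.Icc x y, ‖c*(deriv vhat r - b*r)‖ ≤ a*y := by
      intro r hr
      have hrnn : 0 ≤ r := le_trans hx hr.1
      have h1 := hvd' r (by rw [abs_of_nonneg hrnn]; linarith [hr.2])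
      rw [Real.norm_eq_abs, abs_mul, abs_of_pos hc]
      calc c * |deriv vhat r - b*r| = c * |deriv vhat r - r*b| := by rw [mul_comm b r]
        _ ≤ c * ((a/c)*|r|) := by
            exact mul_le_mul_of_nonneg_left h1 hc.le
        _ = a * |r| := by field_simp
        _ ≤ a * y := by
            apply mul_le_mul_of_nonneg_left _ ha.le
            rw [abs_of_nonneg hrnn]; exact hr.2
    have := hconv.norm_image_sub_le_of_norm_hasDerivWithin_le hder hbound
      (Set.left_mem_Icc.mpr hxy) (Set.right_mem_Icc.mpr hxy)
    rw [Real.norm_eq_abs, Real.norm_eq_abs, abs_of_nonneg (by linarith : (0:ℝ) ≤ y - x)] at this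
    exact this
  -- monotonicity of F on [0, 2δ]
  have hFderiv : ∀ r : ℝ, |r| ≤ 2*δ →
      HasDerivAt F (r^3 + c*(deriv vhat r * r^2 + vhat r * (2*r))) r := by
    intro r hr
    have h1 : HasDerivAt (fun x : ℝ => x^4/4) (r^3) r := by
      have := (hasDerivAt_pow 4 r).div_const 4
      exact this.congr_deriv (by push_cast; ring)
    have h2 : HasDerivAt (fun x : ℝ => vhat x * x^2) (deriv vhat r * r^2 + vhat r * (2*r)) r := by
      have := (hDr' r hr).mul (hasDerivAt_pow 2 r)
      exact this.congr_deriv (by push_cast; ring)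
    rw [hF_def]
    exact h1.add (h2.const_mul c)
  have hFmono : StrictMonoOn F (Set.Icc 0 (2*δ)) := by
    apply strictMonoOn_of_deriv_pos (convex_Icc 0 (2*δ)) hFcont.continuousOn
    intro r hr
    rw [interior_Icc] at hr
    obtain ⟨hr0, hr2⟩ := hr
    have hrabs : |r| ≤ 2*δ := by rw [abs_of_pos hr0]; linarith
    rw [(hFderiv r hrabs).deriv]
    -- bound: deriv vhat r ≥ r*b - (a/c)*r, vhat r ≥ vhat 0/2
    have h1 := hvd' r hrabs
    rw [abs_of_pos hr0] at h1
    have h2 := abs_le.mp h1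
    have h3 := hvlb r hrabs
    have h4 : r*b ≥ -(|b| * r) := by
      have := mul_le_mul_of_nonneg_left (neg_abs_le b) hr0.le
      linarith [this]
    have h5 : -((|b| + a/c) * r) ≤ deriv vhat r := by linarith [h4, h2.1]
    have h6 : -((|b| + a/c) * r)*r^2 ≤ deriv vhat r * r^2 :=
      mul_le_mul_of_nonneg_right h5 (sq_nonneg r)
    have h7 : (vhat 0/2)*(2*r) ≤ vhat r * (2*r) :=
      mul_le_mul_of_nonneg_right h3 (by linarith)
    have h8 : c*(-((|b| + a/c) * r)*r^2 + (vhat 0/2)*(2*r)) ≤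
        c*(deriv vhat r * r^2 + vhat r * (2*r)) :=
      mul_le_mul_of_nonneg_left (by linarith) hc.le
    have hac : c * (a/c) = a := by field_simp
    have h9 : c*(-((|b| + a/c) * r)*r^2 + (vhat 0/2)*(2*r)) = -(c * |b| + a)*r^3 + ν*r := by
      linear_combination (r : ℝ) * hcv - r^3 * hac
    have h10 : (c * |b| + a)*r^2 ≤ ν/2 := by
      have hb1 : 0 ≤ c * |b| + a := by positivity
      have hr3 : r ≤ 2*δ3 := by linarith
      have hsq : r^2 ≤ (2*δ3)^2 := by
        rw [pow_two, pow_two]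
        exact mul_self_le_mul_self hr0.le hr3
      exact (mul_le_mul_of_nonneg_left hsq hb1).trans hδ3bound
    have hm := mul_le_mul_of_nonneg_right h10 hr0.le
    linarith [h8, h9, hm, mul_pos hν hr0, pow_pos hr0 3]
  -- subadditivity
  have hsub : ∀ p k : ℝ, 0 ≤ p → 0 ≤ k → p ≤ δ → k ≤ δ →
      Real.sqrt (F (|p - k|)) ≤ Real.sqrt (F p) + Real.sqrt (F k) := by
    intro p k hp hk hpδ hkδ
    rcases le_total k p with h | h
    · rw [abs_of_nonneg (by linarith)]
      have h1 : F (p - k) ≤ F p := by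
        rcases eq_or_lt_of_le (show p - k ≤ p by linarith) with he | hl
        · rw [he]
        · exact le_of_lt (hFmono ⟨by linarith, by linarith⟩ ⟨hp, by linarith⟩ hl)
      have := Real.sqrt_le_sqrt h1
      linarith [Real.sqrt_nonneg (F k)]
    · rw [abs_of_nonpos (by linarith), neg_sub]
      have h1 : F (k - p) ≤ F k := by
        rcases eq_or_lt_of_le (show k - p ≤ k by linarith) with he | hl
        · rw [he]
        · exact le_of_lt (hFmono ⟨by linarith, by linarith⟩ ⟨hk, by linarith⟩ hl)
      have := Real.sqrt_le_sqrt h1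
      linarith [Real.sqrt_nonneg (F p)]
  -- superadditivity
  have hsuper : ∀ p k : ℝ, 0 ≤ p → 0 < k → p ≤ δ → k ≤ δ →
      Real.sqrt (F p) + Real.sqrt (F k) ≤ Real.sqrt (F (p + k)) := by
    intro p k hp hk hpδ hkδ
    rcases hp.eq_or_lt with h | h
    · rw [← h, hF0, Real.sqrt_zero, zero_add, zero_add]
    · have hFp := hFnn p hp
      have hFk := hFnn k hk.le
      have hFpk := hFnn (p + k) (by linarith)
      set sp := Real.sqrt (F p) with hsp_def
      set sk := Real.sqrt (F k) with hsk_def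
      have hsp2 : sp^2 = F p := Real.sq_sqrt hFp
      have hsk2 : sk^2 = F k := Real.sq_sqrt hFk
      have hspnn : 0 ≤ sp := Real.sqrt_nonneg _
      have hsknn : 0 ≤ sk := Real.sqrt_nonneg _
      rw [Real.le_sqrt (by positivity) hFpk]
      -- E estimates
      have hE1 := hEdiff p (p + k) hp (by linarith) (by linarith)
      have hE2 := hEdiff k (p + k) hk.le (by linarith) (by linarith)
      rw [show a*(p+k)*((p+k)-p) = a*(p+k)*k by ring] at hE1
      rw [show a*(p+k)*((p+k)-k) = a*(p+k)*p by ring] at hE2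
      have hE1l := (abs_le.mp hE1).1
      have hE2l := (abs_le.mp hE2).1
      have cross : 2*(p*k)*(sp*sk) ≤ k^2*(F p) + p^2*(F k) :=
        stmt16_cross p k sp sk (F p) (F k) hsp2 hsk2
      have key : (p*k + k^2)*(F p) + (p*k + p^2)*(F k) ≤ p*k*(F (p+k)) := by
        rw [hFE p, hFE k, hFE (p+k)]
        exact stmt16_key a ν p k (E p) (E k) (E (p+k)) ha h hk hE1l hE2l
      exact stmt16_final p k sp sk (F p) (F k) (F (p+k)) h hk hsp2 hsk2 cross key
  -- main construction
  refine ⟨δ, hδpos, δ, hδpos, ?_⟩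
  intro kvec hk0 hkδ p hp
  obtain ⟨hp0, hpδ⟩ := hp
  set k : ℝ := ‖kvec‖ with hk_def
  -- IVT
  have hab : |p - k| ≤ p + k := abs_le.mpr ⟨by linarith, by linarith⟩
  have hωcont : ContinuousOn (fun r => Real.sqrt (F r)) (Set.Icc |p - k| (p + k)) :=
    (Real.continuous_sqrt.comp hFcont).continuousOn
  have hmem : Real.sqrt (F p) + Real.sqrt (F k) ∈
      Set.Icc (Real.sqrt (F (|p - k|))) (Real.sqrt (F (p + k))) :=
    ⟨hsub p k hp0 hk0.le hpδ hkδ, hsuper p k hp0 hk0 hpδ hkδ⟩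
  obtain ⟨r, hrIcc, hr⟩ := intermediate_value_Icc hab hωcont hmem
  obtain ⟨hrl, hru⟩ := hrIcc
  have hr0 : 0 ≤ r := le_trans (abs_nonneg _) hrl
  -- orthogonal unit vector
  have hkvec : kvec ≠ 0 := by
    have hknorm : ‖kvec‖ ≠ 0 := by rw [← hk_def]; exact ne_of_gt hk0
    exact norm_ne_zero_iff.mp hknorm
  obtain ⟨w, hw_orth, hw_norm⟩ :
      ∃ w : EuclideanSpace ℝ (Fin 3), inner ℝ w kvec = 0 ∧ ‖w‖ = 1 := by
    have h1 : Module.finrank ℝ (ℝ ∙ kvec) = 1 := finrank_span_singleton hkvec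
    have h2 := Submodule.finrank_add_finrank_orthogonal (K := ℝ ∙ kvec)
    have h3 : Module.finrank ℝ (EuclideanSpace ℝ (Fin 3)) = 3 := by
      simp [finrank_euclideanSpace_fin]
    have h4 : (ℝ ∙ kvec)ᗮ ≠ ⊥ := by
      intro hbot
      rw [hbot, h1, h3, finrank_bot ℝ (EuclideanSpace ℝ (Fin 3))] at h2
      omega
    obtain ⟨w0, hw0mem, hw0⟩ := (Submodule.ne_bot_iff _).mp h4
    have hw0n : ‖w0‖ ≠ 0 := norm_ne_zero_iff.mpr hw0
    refine ⟨(‖w0‖⁻¹ : ℝ) • w0, ?_, ?_⟩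
    · rw [real_inner_smul_left]
      have hin : inner ℝ kvec w0 = 0 :=
        (Submodule.mem_orthogonal _ _).mp hw0mem kvec (Submodule.mem_span_singleton_self kvec)
      rw [real_inner_comm] at hin
      rw [hin, mul_zero]
    · rw [norm_smul, norm_inv, norm_norm, inv_mul_cancel₀ hw0n]
  -- construct pvec
  set s : ℝ := (p^2 + k^2 - r^2)/2 with hs_def
  have hk2 : (0:ℝ) < k^2 := by positivity
  have hs2 : s^2 ≤ p^2*k^2 := by
    rw [hs_def]; exact stmt16_s2 p k r hrl hru
  have hsd : s^2/k^2 ≤ p^2 := by rw [div_le_iff₀ hk2]; exact hs2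
  set t : ℝ := Real.sqrt (p^2 - s^2/k^2) with ht_def
  have ht2 : t^2 = p^2 - s^2/k^2 := Real.sq_sqrt (by linarith)
  set pvec : EuclideanSpace ℝ (Fin 3) := (s/k^2) • kvec + t • w with hpvec_def
  have hinner : inner ℝ ((s/k^2) • kvec) (t • w) = 0 := by
    rw [real_inner_smul_left, real_inner_smul_right, real_inner_comm, hw_orth]
    ring
  have hnp2 : ‖pvec‖^2 = p^2 := by
    rw [hpvec_def, norm_add_sq_real, hinner, norm_smul, norm_smul, hw_norm]
    rw [mul_pow, mul_pow, Real.norm_eq_abs, Real.norm_eq_abs, sq_abs, sq_abs]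
    rw [← hk_def]
    rw [ht2]
    field_simp
    ring
  have hpv : ‖pvec‖ = p := by
    have := Real.sqrt_sq (norm_nonneg pvec)
    rw [hnp2] at this
    rw [← this, Real.sqrt_sq hp0]
  have hdiffeq : pvec - kvec = (s/k^2 - 1) • kvec + t • w := by
    rw [hpvec_def]; module
  have hinner2 : inner ℝ ((s/k^2 - 1) • kvec) (t • w) = 0 := by
    rw [real_inner_smul_left, real_inner_smul_right, real_inner_comm, hw_orth]
    ring
  have hnr2 : ‖pvec - kvec‖^2 = r^2 := by
    rw [hdiffeq, norm_add_sq_real, hinner2, norm_smul, norm_smul, hw_norm]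
    rw [mul_pow, mul_pow, Real.norm_eq_abs, Real.norm_eq_abs, sq_abs, sq_abs]
    rw [← hk_def, ht2, hs_def]
    field_simp
    ring
  have hnr : ‖pvec - kvec‖ = r := by
    have := Real.sqrt_sq (norm_nonneg (pvec - kvec))
    rw [hnr2] at this
    rw [← this, Real.sqrt_sq hr0]
  refine ⟨pvec, hpv, ?_⟩
  have hr' : Real.sqrt (F r) = Real.sqrt (F p) + Real.sqrt (F k) := hr
  rw [homega, homega, homega, hpv, hnr, hr']
  ring
end

section
/- The improper integral ∫₀^∞ (1/z²) · [ ( 3/2 − 1/√(z²+1) − 1/(z²+1) + 1/(2(z²+1)²) ) + z² ( 1/(2(z²+1)) − 1/(z²+1)^{3/2} + 3/(2(z²+1)²) − 3/(2(z²+1)³) ) − (3/2) · z⁴/(z²+1)³ ] dz converges and equals 3π/8. -/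
open MeasureTheory Set Filter Real

noncomputable def hfun (z : ℝ) : ℝ :=
  1 / (z ^ 2 + 1) - 1 / (2 * (z ^ 2 + 1) ^ 2) - 1 / Real.sqrt (z ^ 2 + 1) ^ 3
    + 1 / (Real.sqrt (z ^ 2 + 1) * (Real.sqrt (z ^ 2 + 1) + 1))

noncomputable def Ffun (z : ℝ) : ℝ :=
  3 / 4 * Real.arctan z - z / (4 * (z ^ 2 + 1)) - z / Real.sqrt (z ^ 2 + 1)
    + z / (Real.sqrt (z ^ 2 + 1) + 1)

lemma sq_add_one_pos (z : ℝ) : (0:ℝ) < z ^ 2 + 1 := by positivity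

lemma sqrt_pos' (z : ℝ) : 0 < Real.sqrt (z ^ 2 + 1) :=
  Real.sqrt_pos.2 (sq_add_one_pos z)

lemma sqrt_sq' (z : ℝ) : Real.sqrt (z ^ 2 + 1) ^ 2 = z ^ 2 + 1 :=
  Real.sq_sqrt (sq_add_one_pos z).le

lemma one_le_sqrt' (z : ℝ) : 1 ≤ Real.sqrt (z ^ 2 + 1) := by
  nlinarith [sqrt_sq' z, Real.sqrt_nonneg (z ^ 2 + 1), sq_nonneg z,
    sq_nonneg (Real.sqrt (z ^ 2 + 1) - 1)]

/-- Pointwise identity on `Ioi 0`. -/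
lemma key_eq (z : ℝ) (hz : 0 < z) :
    1 / z ^ 2 *
        ((3 / 2 - 1 / Real.sqrt (z ^ 2 + 1) - 1 / (z ^ 2 + 1) + 1 / (2 * (z ^ 2 + 1) ^ 2))
          + z ^ 2 * (1 / (2 * (z ^ 2 + 1)) - 1 / Real.sqrt (z ^ 2 + 1) ^ 3
            + 3 / (2 * (z ^ 2 + 1) ^ 2) - 3 / (2 * (z ^ 2 + 1) ^ 3))
          - 3 / 2 * z ^ 4 / (z ^ 2 + 1) ^ 3) = hfun z := by
  rw [hfun]
  set s := Real.sqrt (z ^ 2 + 1) with hsdef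
  have hs : 0 < s := sqrt_pos' z
  have hs2 : s ^ 2 = z ^ 2 + 1 := sqrt_sq' z
  have hs1 : 1 < s := by
    nlinarith [sq_add_one_pos z]
  have hz2 : z ^ 2 = s ^ 2 - 1 := by rw [hs2]; ring
  have hz4 : z ^ 4 = (s ^ 2 - 1) ^ 2 := by
    have : z ^ 4 = (z ^ 2) ^ 2 := by ring
    rw [this, hz2]
  rw [← hs2, hz4, hz2]
  have h1 : s ^ 2 - 1 ≠ 0 := by nlinarith
  have h2 : s ≠ 0 := hs.ne'
  have h3 : s + 1 ≠ 0 := by positivity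
  field_simp
  ring


lemma hfun_cont : Continuous hfun := by
  have hsq : Continuous fun z : ℝ => Real.sqrt (z ^ 2 + 1) := by
    exact (Real.continuous_sqrt).comp (by continuity)
  apply Continuous.add
  · apply Continuous.sub
    · apply Continuous.sub
      · exact continuous_const.div (by continuity) fun z => (sq_add_one_pos z).ne'
      · exact continuous_const.div (by continuity)
          fun z => by positivity
    · exact continuous_const.div (by fun_prop)
        fun z => by have := sqrt_pos' z; positivity
  · exact continuous_const.div (by fun_prop)
      fun z => by have := sqrt_pos' z; positivity

lemma hfun_integrable : IntegrableOn hfun (Set.Ioi 0) volume := by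
  have base : Integrable (fun z : ℝ => 4 / (z ^ 2 + 1)) := by
    simpa [div_eq_mul_inv, add_comm] using
      (integrable_inv_one_add_sq.const_mul (4:ℝ))
  refine (Integrable.mono' base hfun_cont.aestronglyMeasurable ?_).integrableOn
  filter_upwards with z
  have h0 := sq_add_one_pos z
  have hsle : 1 ≤ Real.sqrt (z ^ 2 + 1) := one_le_sqrt' z
  have hs : 0 < Real.sqrt (z ^ 2 + 1) := sqrt_pos' z
  have hs2 := sqrt_sq' z
  have e1 : (0:ℝ) < 1 / (z ^ 2 + 1) := by positivity
  have b1 : 1 / (z ^ 2 + 1) ≤ 1 / (z ^ 2 + 1) := le_rfl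
  have b2 : 1 / (2 * (z ^ 2 + 1) ^ 2) ≤ 1 / (z ^ 2 + 1) := by
    apply div_le_div_of_nonneg_left (by norm_num) h0
    nlinarith
  have b3 : 1 / Real.sqrt (z ^ 2 + 1) ^ 3 ≤ 1 / (z ^ 2 + 1) := by
    apply div_le_div_of_nonneg_left (by norm_num) h0
    calc z ^ 2 + 1 = Real.sqrt (z ^ 2 + 1) ^ 2 := hs2.symm
      _ ≤ Real.sqrt (z ^ 2 + 1) ^ 3 := by nlinarith
  have b4 : 1 / (Real.sqrt (z ^ 2 + 1) * (Real.sqrt (z ^ 2 + 1) + 1)) ≤ 1 / (z ^ 2 + 1) := by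
    apply div_le_div_of_nonneg_left (by norm_num) h0
    nlinarith
  have nn2 : (0:ℝ) ≤ 1 / (2 * (z ^ 2 + 1) ^ 2) := by positivity
  have nn3 : (0:ℝ) ≤ 1 / Real.sqrt (z ^ 2 + 1) ^ 3 := by positivity
  have nn4 : (0:ℝ) ≤ 1 / (Real.sqrt (z ^ 2 + 1) * (Real.sqrt (z ^ 2 + 1) + 1)) := by positivity
  have e4 : 4 / (z ^ 2 + 1) = 4 * (1 / (z ^ 2 + 1)) := by ring
  rw [Real.norm_eq_abs, abs_le]
  constructor
  · rw [hfun]; linarith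
  · rw [hfun]; linarith

lemma Ffun_deriv (x : ℝ) : HasDerivAt Ffun (hfun x) x := by
  have h0 := sq_add_one_pos x
  have hs : 0 < Real.sqrt (x ^ 2 + 1) := sqrt_pos' x
  have hs2 := sqrt_sq' x
  set s := Real.sqrt (x ^ 2 + 1) with hsdef
  have hsne : s ≠ 0 := hs.ne'
  have hsp : (0:ℝ) < s + 1 := by positivity
  have hsqrt : HasDerivAt (fun z : ℝ => Real.sqrt (z ^ 2 + 1)) (x / s) x := by
    have h1 : HasDerivAt (fun z : ℝ => z ^ 2 + 1) (2 * x) x := by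
      simpa using ((hasDerivAt_pow 2 x).add_const 1)
    have h2 := (Real.hasDerivAt_sqrt h0.ne').comp x h1
    refine h2.congr_deriv ?_
    rw [← hsdef]
    field_simp
  have hxx : s - x * (x / s) = 1 / s := by
    field_simp
    linarith [hs2]
  have d1 : HasDerivAt (fun z : ℝ => 3 / 4 * Real.arctan z)
      (3 / 4 * (1 + x ^ 2)⁻¹) x := by
    simpa using (Real.hasDerivAt_arctan x).const_mul (3 / 4 : ℝ)
  have d2 : HasDerivAt (fun z : ℝ => z / (4 * (z ^ 2 + 1)))
      ((4 * (x ^ 2 + 1) - x * (4 * (2 * x))) / (4 * (x ^ 2 + 1)) ^ 2) x := by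
    have hden : HasDerivAt (fun z : ℝ => 4 * (z ^ 2 + 1)) (4 * (2 * x)) x := by
      simpa using (((hasDerivAt_pow 2 x).add_const 1).const_mul (4:ℝ))
    simpa [Pi.div_def] using (hasDerivAt_id x).div hden (by positivity)
  have d3 : HasDerivAt (fun z : ℝ => z / Real.sqrt (z ^ 2 + 1)) (1 / s ^ 3) x := by
    have := (hasDerivAt_id x).div hsqrt hsne
    simp only [id_eq, one_mul] at this
    rw [← hsdef] at this
    refine this.congr_deriv ?_
    rw [hxx]
    field_simp
  have d4 : HasDerivAt (fun z : ℝ => z / (Real.sqrt (z ^ 2 + 1) + 1))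
      (1 / (s * (s + 1))) x := by
    have hden : HasDerivAt (fun z : ℝ => Real.sqrt (z ^ 2 + 1) + 1) (x / s) x :=
      hsqrt.add_const 1
    have := (hasDerivAt_id x).div hden hsp.ne'
    simp only [id_eq, one_mul] at this
    rw [← hsdef] at this
    refine this.congr_deriv ?_
    have hnum : s + 1 - x * (x / s) = 1 / s + 1 := by
      have : s + 1 - x * (x / s) = (s - x * (x / s)) + 1 := by ring
      rw [this, hxx]
    rw [hnum]
    field_simp
    ring
  have := ((d1.sub d2).sub d3).add d4
  refine this.congr_deriv ?_
  rw [hfun, ← hsdef]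
  have e1 : 1 / (x ^ 2 + 1) - 1 / (2 * (x ^ 2 + 1) ^ 2) =
      3 / 4 * (1 + x ^ 2)⁻¹ - (4 * (x ^ 2 + 1) - x * (4 * (2 * x))) / (4 * (x ^ 2 + 1)) ^ 2 := by
    field_simp
    ring
  linarith [e1]

lemma Ffun_tendsto : Tendsto Ffun atTop (nhds (3 * Real.pi / 8)) := by
  have hinv2 : Tendsto (fun z : ℝ => 1 / (z ^ 2 + 1)) atTop (nhds 0) := by
    have : Tendsto (fun z : ℝ => z ^ 2 + 1) atTop atTop :=
      tendsto_atTop_add_const_right _ _ (tendsto_pow_atTop (by norm_num))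
    simpa [one_div, Pi.inv_def] using this.inv_tendsto_atTop
  have hinv : Tendsto (fun z : ℝ => 1 / Real.sqrt (z ^ 2 + 1)) atTop (nhds 0) := by
    have h := hinv2.sqrt
    simp only [Real.sqrt_zero] at h
    refine h.congr fun z => ?_
    rw [one_div, one_div, Real.sqrt_inv]
  -- z / sqrt(z^2+1) → 1
  have h3 : Tendsto (fun z : ℝ => z / Real.sqrt (z ^ 2 + 1)) atTop (nhds 1) := by
    have h := (((tendsto_const_nhds : Tendsto (fun _ : ℝ => (1:ℝ)) atTop (nhds 1)).sub
      hinv2)).sqrt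
    simp only [sub_zero, Real.sqrt_one] at h
    apply h.congr'
    filter_upwards [eventually_gt_atTop (0:ℝ)] with z hz
    have h0 := sq_add_one_pos z
    have e : (1:ℝ) - 1 / (z ^ 2 + 1) = z ^ 2 / (z ^ 2 + 1) := by field_simp; ring
    rw [e, Real.sqrt_div (sq_nonneg z), Real.sqrt_sq hz.le]
  -- z / (sqrt(z^2+1)+1) → 1
  have h4 : Tendsto (fun z : ℝ => z / (Real.sqrt (z ^ 2 + 1) + 1)) atTop (nhds 1) := by
    have hfrac : Tendsto (fun z : ℝ => 1 / (1 + 1 / Real.sqrt (z ^ 2 + 1))) atTop (nhds 1) := by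
      have := (tendsto_const_nhds : Tendsto (fun _ : ℝ => (1:ℝ)) atTop (nhds 1)).div
        ((tendsto_const_nhds : Tendsto (fun _ : ℝ => (1:ℝ)) atTop (nhds 1)).add hinv)
        (by norm_num : (1:ℝ) + 0 ≠ 0)
      simpa [Pi.div_def] using this
    have := h3.mul hfrac
    rw [one_mul] at this
    refine this.congr fun z => ?_
    have hs : 0 < Real.sqrt (z ^ 2 + 1) := sqrt_pos' z
    have h1 : Real.sqrt (z ^ 2 + 1) + 1 ≠ 0 := by positivity
    field_simp
  -- z / (4(z^2+1)) → 0
  have h2 : Tendsto (fun z : ℝ => z / (4 * (z ^ 2 + 1))) atTop (nhds 0) := by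
    have := (h3.mul hinv).div_const 4
    simp only [one_mul, zero_div] at this
    refine this.congr fun z => ?_
    have e : Real.sqrt (z ^ 2 + 1) * Real.sqrt (z ^ 2 + 1) = z ^ 2 + 1 :=
      Real.mul_self_sqrt (sq_add_one_pos z).le
    rw [div_mul_div_comm, mul_one, e]
    have h0 := sq_add_one_pos z
    rw [div_div]
    congr 1
    ring
  have harctan : Tendsto (fun z : ℝ => 3 / 4 * Real.arctan z) atTop
      (nhds (3 / 4 * (Real.pi / 2))) :=
    (Real.tendsto_arctan_atTop.mono_right nhdsWithin_le_nhds).const_mul _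
  have := ((harctan.sub h2).sub h3).add h4
  have hval : 3 / 4 * (Real.pi / 2) - 0 - 1 + 1 = 3 * Real.pi / 8 := by ring
  rw [hval] at this
  exact this

/-- the high-temperature Landau damping integral equals `3π/8`. -/
theorem stmt_18 :
    MeasureTheory.IntegrableOn (fun z : ℝ =>
      1 / z ^ 2 *
        ((3 / 2 - 1 / Real.sqrt (z ^ 2 + 1) - 1 / (z ^ 2 + 1) + 1 / (2 * (z ^ 2 + 1) ^ 2))
          + z ^ 2 * (1 / (2 * (z ^ 2 + 1)) - 1 / Real.sqrt (z ^ 2 + 1) ^ 3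
            + 3 / (2 * (z ^ 2 + 1) ^ 2) - 3 / (2 * (z ^ 2 + 1) ^ 3))
          - 3 / 2 * z ^ 4 / (z ^ 2 + 1) ^ 3)) (Set.Ioi 0) MeasureTheory.volume ∧
    ∫ z in Set.Ioi (0:ℝ),
      1 / z ^ 2 *
        ((3 / 2 - 1 / Real.sqrt (z ^ 2 + 1) - 1 / (z ^ 2 + 1) + 1 / (2 * (z ^ 2 + 1) ^ 2))
          + z ^ 2 * (1 / (2 * (z ^ 2 + 1)) - 1 / Real.sqrt (z ^ 2 + 1) ^ 3
            + 3 / (2 * (z ^ 2 + 1) ^ 2) - 3 / (2 * (z ^ 2 + 1) ^ 3))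
          - 3 / 2 * z ^ 4 / (z ^ 2 + 1) ^ 3) = 3 * Real.pi / 8 := by
  have hcongr : Set.EqOn (fun z : ℝ =>
      1 / z ^ 2 *
        ((3 / 2 - 1 / Real.sqrt (z ^ 2 + 1) - 1 / (z ^ 2 + 1) + 1 / (2 * (z ^ 2 + 1) ^ 2))
          + z ^ 2 * (1 / (2 * (z ^ 2 + 1)) - 1 / Real.sqrt (z ^ 2 + 1) ^ 3
            + 3 / (2 * (z ^ 2 + 1) ^ 2) - 3 / (2 * (z ^ 2 + 1) ^ 3))
          - 3 / 2 * z ^ 4 / (z ^ 2 + 1) ^ 3)) hfun (Set.Ioi 0) := fun z hz => key_eq z hz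
  have hint : IntegrableOn (fun z : ℝ =>
      1 / z ^ 2 *
        ((3 / 2 - 1 / Real.sqrt (z ^ 2 + 1) - 1 / (z ^ 2 + 1) + 1 / (2 * (z ^ 2 + 1) ^ 2))
          + z ^ 2 * (1 / (2 * (z ^ 2 + 1)) - 1 / Real.sqrt (z ^ 2 + 1) ^ 3
            + 3 / (2 * (z ^ 2 + 1) ^ 2) - 3 / (2 * (z ^ 2 + 1) ^ 3))
          - 3 / 2 * z ^ 4 / (z ^ 2 + 1) ^ 3)) (Set.Ioi 0) volume := by
    apply hfun_integrable.congr_fun (fun z hz => (hcongr hz).symm) measurableSet_Ioi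
  refine ⟨hint, ?_⟩
  rw [setIntegral_congr_fun measurableSet_Ioi hcongr]
  have := integral_Ioi_of_hasDerivAt_of_tendsto' (f := Ffun) (f' := hfun) (a := 0)
    (fun x _ => Ffun_deriv x) hfun_integrable Ffun_tendsto
  rw [this]
  have : Ffun 0 = 0 := by simp [Ffun]
  rw [this, sub_zero]
end
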